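/- arXiv:2011.14893 — 6 statements merged into one kernel-verified Lean document; each statement's English description precedes it below -/
import Mathlib

section
/- Let X and Y be i.i.d. random variables with Gamma distribution with shape α > 0 and scale θ > 0 (density t ↦ t^(α-1) e^(-t/θ) / (θ^α Γ(α)) on (0,∞)). Then for j ∈ {1,2}, E[(min{X,Y})^j] = θ^j Γ(α+j)/Γ(α) − (j θ^j/√π) · Γ(α+j−1/2)/Γ(α). -/
/-!
Splitting `min x y` according to whether `y < x` gives, for every measure `μ` and every
`f ≥ 0`, the identity `∬ f (min x y) + ∫ f(x) μ(-∞, x) = ∫∫_{y<x} f(y) + μ(ℝ) ∫ f`. For the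
Gamma law and `f(x) = x ^ j` it reads `E[min(X,Y)^j] = E[X^j] - ∬_{y<x} (x^j - y^j)`.
The substitution `y = x v` turns each double integral of unnormalised Gamma densities into
`Γ(2α+j) θ^(2α+j)` times `∫₀¹ v^(b-1) (1+v)^(-(2α+j)) dv`. For `j = 1, 2` the difference of the
two such integrals is `∫₀¹ v^(α-1) (1-v) (1+v)^(-(2α+1)) dv = 4^(-α) / α`, the integral of an
exact derivative, and Legendre's duplication formula turns `Γ(2α+j) 4^(-α) / (α Γ(α))` into
`j Γ(α+j-1/2) / √π`.
-/

open MeasureTheory ProbabilityTheory Real Set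
open scoped ENNReal

theorem ENNReal.toReal_eq_add_sub_of_add_ofReal_eq {x : ℝ≥0∞} {a b c : ℝ} (ha : 0 ≤ a)
    (hb : 0 ≤ b) (hc : 0 ≤ c) (h : x + ENNReal.ofReal a = ENNReal.ofReal b + ENNReal.ofReal c) :
    x.toReal = b + c - a := by
  have hx : x ≠ ⊤ := ne_top_of_le_ne_top (by simp) (h ▸ le_self_add)
  rw [← ENNReal.ofReal_toReal hx, ← ENNReal.ofReal_add ENNReal.toReal_nonneg ha,
    ← ENNReal.ofReal_add hb hc, ENNReal.ofReal_eq_ofReal_iff (by positivity) (by positivity)] at h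
  linarith

section MinOfTwo

variable {μ : Measure ℝ}

theorem lintegral_comp_min_eq_setLIntegral_Iio_add (f : ℝ → ℝ≥0∞) (x : ℝ) :
    ∫⁻ y, f (min x y) ∂μ = ∫⁻ y in Iio x, f y ∂μ + f x * μ (Ici x) := by
  rw [← lintegral_add_compl _ measurableSet_Iio, compl_Iio,
    setLIntegral_congr_fun measurableSet_Iio fun y (hy : y < x) ↦ by rw [min_eq_right hy.le],
    setLIntegral_congr_fun measurableSet_Ici fun y (hy : x ≤ y) ↦ by rw [min_eq_left hy],
    setLIntegral_const]

theorem lintegral_lintegral_comp_min_add {f : ℝ → ℝ≥0∞} (hf : Measurable f) :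
    ∫⁻ x, ∫⁻ y, f (min x y) ∂μ ∂μ + ∫⁻ x, f x * μ (Iio x) ∂μ =
      ∫⁻ x, ∫⁻ y in Iio x, f y ∂μ ∂μ + μ univ * ∫⁻ x, f x ∂μ := by
  have h_below : Monotone fun x ↦ ∫⁻ y in Iio x, f y ∂μ :=
    fun x x' h ↦ lintegral_mono_set (Iio_subset_Iio h)
  have h_mass : Monotone fun x ↦ μ (Iio x) := fun x x' h ↦ measure_mono (Iio_subset_Iio h)
  rw [← lintegral_add_right _
      (by exact hf.mul h_mass.measurable : Measurable fun x ↦ f x * μ (Iio x)),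
    ← lintegral_const_mul _ hf, ← lintegral_add_left h_below.measurable]
  refine lintegral_congr fun x ↦ ?_
  rw [lintegral_comp_min_eq_setLIntegral_Iio_add, add_assoc, ← mul_add,
    ← measure_union (Iio_disjoint_Ici le_rfl).symm measurableSet_Iio, Ici_union_Iio,
    mul_comm (μ univ)]

end MinOfTwo

theorem integral_min_pow_eq_toReal_lintegral_of_indepFun {Ω : Type*} [MeasureSpace Ω]
    [IsFiniteMeasure (ℙ : Measure Ω)] {X Y : Ω → ℝ} {μ : Measure ℝ} [SFinite μ] [NeZero μ]
    (hX : Measure.map X ℙ = μ) (hY : Measure.map Y ℙ = μ) (hXY : IndepFun X Y ℙ)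
    (hμ : ∀ᵐ x ∂μ, 0 ≤ x) (j : ℕ) :
    ∫ ω, min (X ω) (Y ω) ^ j ∂ℙ = (∫⁻ x, ∫⁻ y, ENNReal.ofReal (min x y ^ j) ∂μ ∂μ).toReal := by
  have hXm : AEMeasurable X ℙ := aemeasurable_of_map_neZero (by rw [hX]; infer_instance)
  have hYm : AEMeasurable Y ℙ := aemeasurable_of_map_neZero (by rw [hY]; infer_instance)
  have h_law : Measure.map (fun ω ↦ (X ω, Y ω)) ℙ = μ.prod μ := by
    rw [(indepFun_iff_map_prod_eq_prod_map_map hXm hYm).mp hXY, hX, hY]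
  have h_nonneg : 0 ≤ᵐ[μ.prod μ] fun p ↦ min p.1 p.2 ^ j := by
    filter_upwards [Measure.quasiMeasurePreserving_fst.ae hμ,
      Measure.quasiMeasurePreserving_snd.ae hμ] with p hp₁ hp₂
    exact pow_nonneg (le_min hp₁ hp₂) j
  calc ∫ ω, min (X ω) (Y ω) ^ j ∂ℙ = ∫ p, min p.1 p.2 ^ j ∂(μ.prod μ) := by
        rw [← h_law, integral_map (hXm.prodMk hYm) (by fun_prop)]
    _ = _ := by
        rw [integral_eq_lintegral_of_nonneg_ae h_nonneg (by fun_prop),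
          lintegral_prod _ (by fun_prop)]

noncomputable def gammaKernel (a c x : ℝ) : ℝ := x ^ (a - 1) * exp (-(c * x))

@[fun_prop]
theorem measurable_gammaKernel (a c : ℝ) : Measurable (gammaKernel a c) := by
  unfold gammaKernel; fun_prop

theorem gammaKernel_nonneg (a c : ℝ) {x : ℝ} (hx : 0 ≤ x) : 0 ≤ gammaKernel a c x := by
  unfold gammaKernel; positivity

theorem gammaKernel_mul_pow (a c : ℝ) {x : ℝ} (hx : 0 < x) (p : ℕ) :
    gammaKernel a c x * x ^ p = gammaKernel (a + p) c x := by
  rw [gammaKernel, gammaKernel, ← rpow_natCast, mul_right_comm, ← rpow_add hx]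
  ring_nf

theorem gammaKernel_mul_mul_gammaKernel (a b c : ℝ) {x v : ℝ} (hx : 0 < x) (hv : 0 < v) :
    gammaKernel a c x * (x * gammaKernel b c (x * v)) =
      v ^ (b - 1) * gammaKernel (a + b) (c * (1 + v)) x := by
  have hx_pow : x ^ (a - 1) * x * x ^ (b - 1) = x ^ (a + b - 1) := by
    rw [← rpow_add_one hx.ne', ← rpow_add hx]; ring_nf
  have h_exp : exp (-(c * x)) * exp (-(c * (x * v))) = exp (-(c * (1 + v) * x)) := by
    rw [← exp_add]; ring_nf
  simp only [gammaKernel, mul_rpow hx.le hv.le, ← hx_pow, ← h_exp]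
  ring

theorem lintegral_gammaKernel {s q : ℝ} (hs : 0 < s) (hq : 0 < q) :
    ∫⁻ x in Ioi 0, ENNReal.ofReal (gammaKernel s q x) = ENNReal.ofReal (Gamma s / q ^ s) := by
  have h_int : ∫ x in Ioi 0, gammaKernel s q x = Gamma s / q ^ s := by
    simp only [gammaKernel]
    rw [integral_rpow_mul_exp_neg_mul_Ioi hs hq, div_rpow zero_le_one hq.le, one_rpow,
      one_div_mul_eq_div]
  rw [← h_int, ofReal_integral_eq_lintegral_ofReal]
  · exact Integrable.of_integral_ne_zero (by rw [h_int]; have := Gamma_pos_of_pos hs; positivity)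
  · exact (ae_restrict_mem measurableSet_Ioi).mono fun x hx ↦ gammaKernel_nonneg s q (le_of_lt hx)

theorem lintegral_Ioc_eq_mul_lintegral_Ioc_comp_mul {x : ℝ} (hx : 0 < x) (g : ℝ → ℝ≥0∞) :
    ∫⁻ y in Ioc 0 x, g y = ENNReal.ofReal x * ∫⁻ v in Ioc 0 1, g (x * v) := by
  have h_image : (x * ·) '' Ioc 0 1 = Ioc 0 x := by
    rw [image_mul_left_Ioc hx, mul_zero, mul_one]
  rw [← h_image, lintegral_image_eq_lintegral_abs_deriv_mul measurableSet_Ioc (f' := fun _ ↦ x)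
      (fun v _ ↦ by simpa using ((hasDerivAt_id v).const_mul x).hasDerivWithinAt)
      (mul_right_injective₀ hx.ne').injOn,
    abs_of_pos hx, lintegral_const_mul' _ _ ENNReal.ofReal_ne_top]

theorem integrableOn_rpow_mul_Ioc_zero_one {b : ℝ} (hb : 0 < b) {h : ℝ → ℝ}
    (hh : ContinuousOn h (Icc 0 1)) :
    IntegrableOn (fun v ↦ v ^ (b - 1) * h v) (Ioc 0 1) := by
  rw [← intervalIntegrable_iff_integrableOn_Ioc_of_le zero_le_one]
  exact (intervalIntegral.intervalIntegrable_rpow' (by linarith)).mul_continuousOn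
    (by rwa [uIcc_of_le zero_le_one])

theorem continuousOn_one_add_rpow (s : ℝ) : ContinuousOn (fun v : ℝ ↦ (1 + v) ^ s) (Icc 0 1) :=
  ContinuousOn.rpow_const (by fun_prop) fun v hv ↦ Or.inl (ne_of_gt (by linarith [hv.1]))

theorem setIntegral_Ioc_rpow_mul_one_add_rpow_nonneg (b s : ℝ) :
    0 ≤ ∫ v in Ioc (0 : ℝ) 1, v ^ b * (1 + v) ^ s :=
  setIntegral_nonneg measurableSet_Ioc fun v ⟨hv, _⟩ ↦ by positivity

theorem lintegral_gammaKernel_mul_lintegral_Ioc {a b c : ℝ} (ha : 0 < a) (hb : 0 < b)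
    (hc : 0 < c) :
    ∫⁻ x in Ioi 0, ENNReal.ofReal (gammaKernel a c x) *
        ∫⁻ y in Ioc 0 x, ENNReal.ofReal (gammaKernel b c y) =
      ENNReal.ofReal (Gamma (a + b) / c ^ (a + b) *
        ∫ v in Ioc 0 1, v ^ (b - 1) * (1 + v) ^ (-(a + b))) := by
  have h_subst : ∀ x ∈ Ioi (0 : ℝ), ENNReal.ofReal (gammaKernel a c x) *
      ∫⁻ y in Ioc 0 x, ENNReal.ofReal (gammaKernel b c y) =
      ∫⁻ v in Ioc 0 1, ENNReal.ofReal (v ^ (b - 1) * gammaKernel (a + b) (c * (1 + v)) x) := by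
    intro x (hx : 0 < x)
    rw [lintegral_Ioc_eq_mul_lintegral_Ioc_comp_mul hx, ← mul_assoc,
      ← ENNReal.ofReal_mul (gammaKernel_nonneg a c hx.le), ← lintegral_const_mul _ (by fun_prop)]
    refine setLIntegral_congr_fun measurableSet_Ioc fun v (hv : v ∈ Ioc 0 1) ↦ ?_
    rw [← ENNReal.ofReal_mul (mul_nonneg (gammaKernel_nonneg a c hx.le) hx.le), mul_assoc,
      gammaKernel_mul_mul_gammaKernel a b c hx hv.1]
  have h_inner : ∀ v ∈ Ioc (0 : ℝ) 1,
      ∫⁻ x in Ioi 0, ENNReal.ofReal (v ^ (b - 1) * gammaKernel (a + b) (c * (1 + v)) x) =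
      ENNReal.ofReal (Gamma (a + b) / c ^ (a + b) * (v ^ (b - 1) * (1 + v) ^ (-(a + b)))) := by
    intro v ⟨hv, _⟩
    have h1v : 0 < 1 + v := by linarith
    simp_rw [ENNReal.ofReal_mul (rpow_nonneg hv.le _)]
    rw [lintegral_const_mul _ (by fun_prop), lintegral_gammaKernel (by linarith) (by positivity),
      ← ENNReal.ofReal_mul (rpow_nonneg hv.le _), mul_rpow hc.le h1v.le, rpow_neg h1v.le]
    congr 1
    field_simp
  have h_int : IntegrableOn (fun v : ℝ ↦ v ^ (b - 1) * (1 + v) ^ (-(a + b))) (Ioc 0 1) :=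
    integrableOn_rpow_mul_Ioc_zero_one hb (continuousOn_one_add_rpow _)
  have hΓ := Gamma_pos_of_pos (add_pos ha hb)
  rw [setLIntegral_congr_fun measurableSet_Ioi h_subst,
    lintegral_lintegral_swap (by unfold gammaKernel; fun_prop),
    setLIntegral_congr_fun measurableSet_Ioc h_inner, ← integral_const_mul,
    ofReal_integral_eq_lintegral_ofReal (h_int.const_mul _)]
  exact (ae_restrict_mem measurableSet_Ioc).mono fun v ⟨hv, _⟩ ↦ by positivity

theorem integral_Ioc_rpow_mul_one_sub_mul_one_add_rpow {α : ℝ} (hα : 0 < α) :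
    ∫ v in Ioc 0 1, v ^ (α - 1) * ((1 - v) * (1 + v) ^ (-(2 * α + 1))) = 2 ^ (-(2 * α)) / α := by
  have h_deriv : ∀ v ∈ Ioo (0 : ℝ) 1, HasDerivAt (fun v ↦ v ^ α * (1 + v) ^ (-(2 * α)) / α)
      (v ^ (α - 1) * ((1 - v) * (1 + v) ^ (-(2 * α + 1)))) v := by
    intro v ⟨hv, _⟩
    have h1v : 0 < 1 + v := by linarith
    have h_one_add : HasDerivAt (fun v ↦ (1 + v) ^ (-(2 * α)))
        (-(2 * α) * (1 + v) ^ (-(2 * α) - 1)) v := by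
      simpa using ((hasDerivAt_id v).const_add 1).rpow_const (p := -(2 * α)) (Or.inl h1v.ne')
    refine (((hasDerivAt_rpow_const (Or.inl hv.ne')).mul h_one_add).div_const α).congr_deriv ?_
    have hv_pow : v ^ α = v ^ (α - 1) * v := by rw [← rpow_add_one hv.ne', sub_add_cancel]
    have h1v_pow : (1 + v) ^ (-(2 * α)) = (1 + v) ^ (-(2 * α + 1)) * (1 + v) := by
      rw [← rpow_add_one h1v.ne', neg_add, neg_add_cancel_right]
    rw [hv_pow, h1v_pow, show -(2 * α) - 1 = -(2 * α + 1) by ring]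
    field_simp
    ring
  rw [← intervalIntegral.integral_of_le zero_le_one,
    intervalIntegral.integral_eq_sub_of_hasDerivAt_of_le zero_le_one
      (((continuousOn_id.rpow_const fun _ _ ↦ Or.inr hα.le).mul
        (continuousOn_one_add_rpow _)).div_const α) h_deriv
      ((intervalIntegrable_iff_integrableOn_Ioc_of_le zero_le_one).mpr
        (integrableOn_rpow_mul_Ioc_zero_one hα
          ((continuousOn_const.sub continuousOn_id).mul (continuousOn_one_add_rpow _))))]
  norm_num [zero_rpow hα.ne']

theorem integral_Ioc_rpow_mul_one_add_rpow_sub {α : ℝ} (hα : 0 < α) {j : ℕ}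
    (hj : j = 1 ∨ j = 2) :
    (∫ v in Ioc 0 1, v ^ (α - 1) * (1 + v) ^ (-(2 * α + j))) -
        ∫ v in Ioc 0 1, v ^ (α + j - 1) * (1 + v) ^ (-(2 * α + j)) =
      2 ^ (-(2 * α)) / α := by
  rw [← integral_sub (integrableOn_rpow_mul_Ioc_zero_one hα (continuousOn_one_add_rpow _))
      (integrableOn_rpow_mul_Ioc_zero_one (b := α + j) (by positivity)
        (continuousOn_one_add_rpow _)),
    ← integral_Ioc_rpow_mul_one_sub_mul_one_add_rpow hα]
  refine setIntegral_congr_fun measurableSet_Ioc fun v ⟨hv, _⟩ ↦ ?_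
  have h1v : 0 < 1 + v := by linarith
  have hv_pow : v ^ (α + j - 1) = v ^ (α - 1) * v ^ j := by
    rw [← rpow_natCast, ← rpow_add hv]; ring_nf
  rw [hv_pow]
  -- `(1 - v ^ j) / (1 + v) ^ (j - 1) = 1 - v` for `j = 1, 2`
  rcases hj with rfl | rfl
  · simp only [Nat.cast_one]
    ring
  · have h1v_pow : (1 + v) ^ (-(2 * α + 1)) = (1 + v) ^ (-(2 * α + 2)) * (1 + v) := by
      rw [← rpow_add_one h1v.ne']; ring_nf
    simp only [h1v_pow, Nat.cast_ofNat]
    ring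

theorem Gamma_two_mul_add_mul_two_rpow_div {α : ℝ} (hα : 0 < α) {j : ℕ} (hj : j = 1 ∨ j = 2) :
    Gamma (2 * α + j) * 2 ^ (-(2 * α)) / (α * Gamma α) = j * Gamma (α + j - 1 / 2) / √π := by
  have hΓ := Gamma_pos_of_pos hα
  have hπ : 0 < √π := sqrt_pos.mpr pi_pos
  rw [div_eq_div_iff (by positivity) hπ.ne']
  rcases hj with rfl | rfl
  · have h_dup := Gamma_mul_Gamma_add_half α
    rw [show 1 - 2 * α = -(2 * α) + 1 by ring, rpow_add_one two_ne_zero] at h_dup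
    rw [show α + (1 : ℕ) - 1 / 2 = α + 1 / 2 by push_cast; ring, Nat.cast_one,
      Gamma_add_one (by positivity)]
    linear_combination (-α) * h_dup
  · have h_dup := Gamma_mul_Gamma_add_half (α + 1)
    rw [Gamma_add_one hα.ne', show 2 * (α + 1) = 2 * α + 2 by ring,
      show 1 - (2 * α + 2) = -(2 * α) - 1 by ring, rpow_sub_one two_ne_zero] at h_dup
    rw [show α + (2 : ℕ) - 1 / 2 = α + 1 + 1 / 2 by push_cast; ring, Nat.cast_ofNat]
    linear_combination (-2 : ℝ) * h_dup

section GammaMeasure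

variable {a c : ℝ}

theorem gammaMeasure_eq_withDensity :
    gammaMeasure a c = (volume.restrict (Ioi 0)).withDensity
      fun x ↦ ENNReal.ofReal (c ^ a / Gamma a * gammaKernel a c x) := by
  rw [gammaMeasure, ← withDensity_indicator measurableSet_Ioi]
  refine withDensity_congr_ae ?_
  filter_upwards [Measure.ae_ne volume 0] with x hx
  rcases hx.lt_or_gt with hx | hx
  · rw [gammaPDF_of_neg hx, indicator_of_notMem (notMem_Ioi.mpr hx.le)]
  · rw [gammaPDF_of_nonneg hx.le, indicator_of_mem (mem_Ioi.mpr hx), gammaKernel, mul_assoc]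

theorem ae_pos_gammaMeasure : ∀ᵐ x ∂gammaMeasure a c, 0 < x := by
  rw [gammaMeasure_eq_withDensity]
  exact (withDensity_absolutelyContinuous _ _).ae_le (ae_restrict_mem measurableSet_Ioi)

theorem setLIntegral_gammaMeasure (ha : 0 < a) (hc : 0 < c) {s : Set ℝ} (hs : MeasurableSet s)
    {g : ℝ → ℝ≥0∞} (hg : Measurable g) :
    ∫⁻ x in s, g x ∂gammaMeasure a c =
      ENNReal.ofReal (c ^ a / Gamma a) *
        ∫⁻ x in s ∩ Ioi 0, ENNReal.ofReal (gammaKernel a c x) * g x := by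
  have hk : 0 ≤ c ^ a / Gamma a := div_nonneg (by positivity) (Gamma_pos_of_pos ha).le
  rw [gammaMeasure_eq_withDensity, restrict_withDensity hs,
    lintegral_withDensity_eq_lintegral_mul _ (by fun_prop) hg, Measure.restrict_restrict hs,
    ← lintegral_const_mul _ (by fun_prop)]
  simp only [Pi.mul_apply, ENNReal.ofReal_mul hk, mul_assoc]

theorem lintegral_pow_gammaMeasure (ha : 0 < a) (hc : 0 < c) (p : ℕ) :
    ∫⁻ x, ENNReal.ofReal (x ^ p) ∂gammaMeasure a c =
      ENNReal.ofReal (c ^ a / Gamma a * (Gamma (a + p) / c ^ (a + p))) := by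
  rw [← setLIntegral_univ, setLIntegral_gammaMeasure ha hc MeasurableSet.univ (by fun_prop),
    univ_inter, setLIntegral_congr_fun measurableSet_Ioi fun x (hx : 0 < x) ↦ by
      rw [← ENNReal.ofReal_mul (gammaKernel_nonneg a c hx.le), gammaKernel_mul_pow a c hx],
    lintegral_gammaKernel (by positivity) hc, ← ENNReal.ofReal_mul
      (div_nonneg (by positivity) (Gamma_pos_of_pos ha).le)]

theorem lintegral_pow_mul_setLIntegral_Iio_pow_gammaMeasure (ha : 0 < a) (hc : 0 < c)
    (p q : ℕ) :
    ∫⁻ x, ENNReal.ofReal (x ^ p) * ∫⁻ y in Iio x, ENNReal.ofReal (y ^ q) ∂gammaMeasure a c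
        ∂gammaMeasure a c =
      ENNReal.ofReal ((c ^ a / Gamma a) ^ 2 * (Gamma (2 * a + p + q) / c ^ (2 * a + p + q) *
        ∫ v in Ioc 0 1, v ^ (a + q - 1) * (1 + v) ^ (-(2 * a + p + q)))) := by
  have hk : 0 ≤ c ^ a / Gamma a := div_nonneg (by positivity) (Gamma_pos_of_pos ha).le
  have h_inner : ∀ x, ∫⁻ y in Iio x, ENNReal.ofReal (y ^ q) ∂gammaMeasure a c =
      ENNReal.ofReal (c ^ a / Gamma a) *
        ∫⁻ y in Ioc 0 x, ENNReal.ofReal (gammaKernel (a + q) c y) := by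
    intro x
    rw [setLIntegral_gammaMeasure ha hc measurableSet_Iio (by fun_prop), Iio_inter_Ioi,
      setLIntegral_congr Ioo_ae_eq_Ioc]
    congr 1
    refine setLIntegral_congr_fun measurableSet_Ioc fun y (hy : y ∈ Ioc 0 x) ↦ ?_
    rw [← ENNReal.ofReal_mul (gammaKernel_nonneg a c hy.1.le), gammaKernel_mul_pow a c hy.1]
  have h_mono : Monotone fun x ↦ ∫⁻ y in Iio x, ENNReal.ofReal (y ^ q) ∂gammaMeasure a c :=
    fun x x' h ↦ lintegral_mono_set (Iio_subset_Iio h)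
  have h_meas : Measurable fun x ↦ ENNReal.ofReal (x ^ p) *
      ∫⁻ y in Iio x, ENNReal.ofReal (y ^ q) ∂gammaMeasure a c :=
    Measurable.mul (by fun_prop) h_mono.measurable
  rw [← setLIntegral_univ, setLIntegral_gammaMeasure ha hc MeasurableSet.univ h_meas,
    univ_inter, setLIntegral_congr_fun measurableSet_Ioi fun x (hx : 0 < x) ↦ by
      rw [h_inner, ← mul_assoc, ← ENNReal.ofReal_mul (gammaKernel_nonneg a c hx.le),
        gammaKernel_mul_pow a c hx, mul_left_comm],
    lintegral_const_mul' _ _ ENNReal.ofReal_ne_top,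
    lintegral_gammaKernel_mul_lintegral_Ioc (by positivity) (by positivity) hc, ← mul_assoc,
    ← ENNReal.ofReal_mul hk, ← ENNReal.ofReal_mul (by positivity),
    show a + p + (a + q) = 2 * a + p + q by ring, sq]

theorem toReal_lintegral_lintegral_min_pow_gammaMeasure (ha : 0 < a) (hc : 0 < c) (j : ℕ) :
    (∫⁻ x, ∫⁻ y, ENNReal.ofReal (min x y ^ j) ∂gammaMeasure a c ∂gammaMeasure a c).toReal =
      (c ^ a / Gamma a) ^ 2 * (Gamma (2 * a + j) / c ^ (2 * a + j) *
          ∫ v in Ioc 0 1, v ^ (a + j - 1) * (1 + v) ^ (-(2 * a + j))) +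
        c ^ a / Gamma a * (Gamma (a + j) / c ^ (a + j)) -
      (c ^ a / Gamma a) ^ 2 * (Gamma (2 * a + j) / c ^ (2 * a + j) *
          ∫ v in Ioc 0 1, v ^ (a - 1) * (1 + v) ^ (-(2 * a + j))) := by
  have := isProbabilityMeasure_gammaMeasure ha hc
  have h_below := lintegral_pow_mul_setLIntegral_Iio_pow_gammaMeasure ha hc j 0
  simp only [pow_zero, ENNReal.ofReal_one, setLIntegral_one, Nat.cast_zero, add_zero] at h_below
  have h_above := lintegral_pow_mul_setLIntegral_Iio_pow_gammaMeasure ha hc 0 j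
  simp only [pow_zero, ENNReal.ofReal_one, one_mul, Nat.cast_zero, add_zero] at h_above
  have h_split := lintegral_lintegral_comp_min_add (μ := gammaMeasure a c)
    (f := fun x ↦ ENNReal.ofReal (x ^ j)) (by fun_prop)
  rw [measure_univ, one_mul, h_below, h_above, lintegral_pow_gammaMeasure ha hc j] at h_split
  have hK := setIntegral_Ioc_rpow_mul_one_add_rpow_nonneg (a - 1) (-(2 * a + j))
  have hJ := setIntegral_Ioc_rpow_mul_one_add_rpow_nonneg (a + j - 1) (-(2 * a + j))
  have hΓ := Gamma_pos_of_pos ha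
  have hΓ₁ := Gamma_pos_of_pos (by positivity : 0 < a + j)
  have hΓ₂ := Gamma_pos_of_pos (by positivity : 0 < 2 * a + j)
  exact ENNReal.toReal_eq_add_sub_of_add_ofReal_eq (by positivity) (by positivity) (by positivity)
    h_split

end GammaMeasure

theorem inv_rpow_div_inv_rpow_add_natCast {θ : ℝ} (hθ : 0 < θ) (x : ℝ) (n : ℕ) :
    θ⁻¹ ^ x / θ⁻¹ ^ (x + n) = θ ^ n := by
  rw [rpow_add (inv_pos.mpr hθ), rpow_natCast, div_mul_cancel_left₀ (by positivity), inv_pow,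
    inv_inv]

/-- If `X, Y` are i.i.d. Gamma(shape `α`, scale `θ`) random variables, then for `j ∈ {1,2}`,
`E[(min{X,Y})^j] = θ^j Γ(α+j)/Γ(α) − (j θ^j/√π) Γ(α+j−1/2)/Γ(α)`. -/
theorem min_gamma_moment {Ω : Type*} [MeasureSpace Ω] [IsProbabilityMeasure (ℙ : Measure Ω)]
    (X Y : Ω → ℝ) (α θ : ℝ) (hα : 0 < α) (hθ : 0 < θ)
    (hX : Measure.map X ℙ = gammaMeasure α θ⁻¹)
    (hY : Measure.map Y ℙ = gammaMeasure α θ⁻¹)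
    (hindep : IndepFun X Y ℙ) :
    ∀ j ∈ ({1, 2} : Set ℕ),
      ∫ ω, (min (X ω) (Y ω)) ^ j ∂ℙ =
        θ ^ j * Real.Gamma (α + j) / Real.Gamma α
          - (j * θ ^ j / Real.sqrt π) * (Real.Gamma (α + j - 1/2) / Real.Gamma α) := by
  intro j (hj : j = 1 ∨ j = 2)
  have hc : 0 < θ⁻¹ := inv_pos.mpr hθ
  have := isProbabilityMeasure_gammaMeasure hα hc
  rw [integral_min_pow_eq_toReal_lintegral_of_indepFun hX hY hindep
      (ae_pos_gammaMeasure.mono fun _ ↦ le_of_lt) j,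
    toReal_lintegral_lintegral_min_pow_gammaMeasure hα hc j]
  have h_sq : (θ⁻¹ ^ α) ^ 2 = θ⁻¹ ^ (2 * α) := by
    rw [← rpow_natCast, ← rpow_mul hc.le]; ring_nf
  have h_mean : θ⁻¹ ^ α / Gamma α * (Gamma (α + j) / θ⁻¹ ^ (α + j)) =
      θ ^ j * Gamma (α + j) / Gamma α := by
    rw [← inv_rpow_div_inv_rpow_add_natCast hθ α j]; ring
  have h_coeff : (θ⁻¹ ^ α / Gamma α) ^ 2 * (Gamma (2 * α + j) / θ⁻¹ ^ (2 * α + j)) =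
      θ ^ j / Gamma α * (Gamma (2 * α + j) / Gamma α) := by
    rw [div_pow, h_sq, ← inv_rpow_div_inv_rpow_add_natCast hθ (2 * α) j]; ring
  calc _ = θ ^ j * Gamma (α + j) / Gamma α - θ ^ j / Gamma α * (Gamma (2 * α + j) / Gamma α) *
        ((∫ v in Ioc 0 1, v ^ (α - 1) * (1 + v) ^ (-(2 * α + j))) -
          ∫ v in Ioc 0 1, v ^ (α + j - 1) * (1 + v) ^ (-(2 * α + j))) := by
        rw [← h_mean, ← h_coeff]; ring
    _ = _ := by
      rw [integral_Ioc_rpow_mul_one_add_rpow_sub hα hj]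
      linear_combination (-(θ ^ j / Gamma α)) * Gamma_two_mul_add_mul_two_rpow_div hα hj
end

section
/- Let X and Y be i.i.d. random variables with Gamma(α, θ) distribution (shape α > 0, scale θ > 0). Then E[min{X,Y}] = θα − (θ/√π) · Γ(α + 1/2)/Γ(α). -/
/-!
Split `min x y` into `y` on `{y ≤ x}` and `x` on `{x < y}`; by Tonelli and since the law has no
atoms, both pieces agree, so `E[min X Y] = 2 ∫ t P(Y > t) dγ(t)`. Substituting `s = t u` in the
tail and integrating first in `t` (a Gamma integral) leaves `Γ(2α+1) θ / Γ(α)²` times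
`∫_1^∞ u^(α-1) (1+u)^(-(2α+1)) du`, which `b = u / (1+u)` turns into the half Beta integral
`∫_{1/2}^1 b^(α-1) (1-b)^α db = B(α,α)/4 - 4^(-α)/(2α)`. Legendre's duplication formula
rewrites `Γ(2α) 4^(-α)` through `Γ(α) Γ(α+1/2)`.
-/

open MeasureTheory ProbabilityTheory Real Set
open scoped ENNReal

lemma ofReal_cpow_mul_one_sub_cpow {u v x : ℝ} (hx : x ∈ Icc (0 : ℝ) 1) :
    (x : ℂ) ^ ((u : ℂ) - 1) * (1 - (x : ℂ)) ^ ((v : ℂ) - 1)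
      = ((x ^ (u - 1) * (1 - x) ^ (v - 1) : ℝ) : ℂ) := by
  rw [Complex.ofReal_mul, Complex.ofReal_cpow hx.1, Complex.ofReal_cpow (by linarith [hx.2])]
  push_cast
  ring_nf

lemma intervalIntegrable_rpow_mul_one_sub_rpow {u v : ℝ} (hu : 0 < u) (hv : 0 < v) :
    IntervalIntegrable (fun x : ℝ => x ^ (u - 1) * (1 - x) ^ (v - 1)) volume 0 1 := by
  have h := (Complex.betaIntegral_convergent (u := u) (v := v) (by simpa) (by simpa)).norm
  refine (intervalIntegrable_congr fun x hx => ?_).1 h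
  rw [uIoc_of_le zero_le_one] at hx
  rw [ofReal_cpow_mul_one_sub_cpow (Ioc_subset_Icc_self hx), Complex.norm_real,
    Real.norm_of_nonneg]
  exact mul_nonneg (rpow_nonneg hx.1.le _) (rpow_nonneg (by linarith [hx.2]) _)

lemma integral_rpow_mul_one_sub_rpow {u v : ℝ} (hu : 0 < u) (hv : 0 < v) :
    ∫ x in (0 : ℝ)..1, x ^ (u - 1) * (1 - x) ^ (v - 1) = beta u v := by
  rw [beta_eq_betaIntegralReal u v hu hv, Complex.betaIntegral,
    intervalIntegral.integral_congr fun x hx =>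
      ofReal_cpow_mul_one_sub_cpow (by rwa [uIcc_of_le zero_le_one] at hx),
    intervalIntegral.integral_ofReal, Complex.ofReal_re]

lemma uIcc_half_one_subset : uIcc (2⁻¹ : ℝ) 1 ⊆ uIcc 0 1 := by
  rw [uIcc_of_le (by norm_num), uIcc_of_le zero_le_one]
  exact Icc_subset_Icc_left (by norm_num)

lemma integral_half_one_rpow_mul_one_sub_rpow_self {a : ℝ} (ha : 0 < a) :
    ∫ x in (2⁻¹ : ℝ)..1, x ^ (a - 1) * (1 - x) ^ (a - 1) = beta a a / 2 := by
  have hint := intervalIntegrable_rpow_mul_one_sub_rpow ha ha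
  have hsplit := intervalIntegral.integral_add_adjacent_intervals
    (hint.mono_set (c := 0) (d := 2⁻¹) (by
      rw [uIcc_of_le (by norm_num), uIcc_of_le zero_le_one]
      exact Icc_subset_Icc_right (by norm_num)))
    (hint.mono_set uIcc_half_one_subset)
  have hreflect : ∫ x in (0 : ℝ)..2⁻¹, x ^ (a - 1) * (1 - x) ^ (a - 1)
      = ∫ x in (2⁻¹ : ℝ)..1, x ^ (a - 1) * (1 - x) ^ (a - 1) := by
    have h := intervalIntegral.integral_comp_sub_left
      (fun x : ℝ => x ^ (a - 1) * (1 - x) ^ (a - 1)) (a := 2⁻¹) (b := 1) 1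
    simp only [sub_self, show (1 : ℝ) - 2⁻¹ = 2⁻¹ by norm_num, sub_sub_cancel] at h
    rw [← h]
    exact intervalIntegral.integral_congr fun x _ => mul_comm _ _
  rw [integral_rpow_mul_one_sub_rpow ha ha, hreflect] at hsplit
  linarith

lemma integral_half_one_two_mul_sub_one_mul_rpow {a : ℝ} (ha : 0 < a) :
    ∫ x in (2⁻¹ : ℝ)..1, (2 * x - 1) * (x * (1 - x)) ^ (a - 1) = 4 ^ (-a) / a := by
  set F : ℝ → ℝ := fun x => -a⁻¹ * (x * (1 - x)) ^ a
  have hcont : ContinuousOn F (Icc 2⁻¹ 1) :=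
    (((continuous_id.mul (continuous_const.sub continuous_id)).rpow_const
      fun _ => Or.inr ha.le).const_mul (-a⁻¹)).continuousOn
  have hderiv : ∀ x ∈ Ioo (2⁻¹ : ℝ) 1, HasDerivAt F ((2 * x - 1) * (x * (1 - x)) ^ (a - 1)) x := by
    intro x hx
    have hpos : 0 < x * (1 - x) := mul_pos (by linarith [hx.1]) (by linarith [hx.2])
    have hbase : HasDerivAt (fun y : ℝ => y * (1 - y)) (1 - 2 * x) x :=
      ((hasDerivAt_id' x).mul ((hasDerivAt_id' x).const_sub 1)).congr_deriv (by ring)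
    exact ((hbase.rpow_const (p := a) (Or.inl hpos.ne')).const_mul (-a⁻¹)).congr_deriv
      (by field_simp; ring)
  have hnonneg : ∀ x ∈ Ioo (2⁻¹ : ℝ) 1, 0 ≤ (2 * x - 1) * (x * (1 - x)) ^ (a - 1) := fun x hx =>
    mul_nonneg (by linarith [hx.1])
      (rpow_nonneg (mul_nonneg (by linarith [hx.1]) (by linarith [hx.2])) _)
  rw [intervalIntegral.integral_eq_sub_of_hasDerivAt_of_le (by norm_num) hcont hderiv
    ((intervalIntegrable_iff_integrableOn_Ioc_of_le (by norm_num)).2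
      (intervalIntegral.integrableOn_deriv_of_nonneg hcont hderiv hnonneg))]
  simp only [F]
  norm_num [zero_rpow ha.ne', div_rpow, rpow_neg]
  ring

lemma integral_half_one_rpow_mul_one_sub_rpow {a : ℝ} (ha : 0 < a) :
    ∫ x in (2⁻¹ : ℝ)..1, x ^ (a - 1) * (1 - x) ^ a = beta a a / 4 - 4 ^ (-a) / (2 * a) := by
  have hS := (intervalIntegrable_rpow_mul_one_sub_rpow ha ha).mono_set uIcc_half_one_subset
  have hA : IntervalIntegrable (fun x : ℝ => x ^ (a - 1) * (1 - x) ^ a) volume 2⁻¹ 1 := by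
    simpa using (intervalIntegrable_rpow_mul_one_sub_rpow ha (by linarith : 0 < a + 1)).mono_set
      uIcc_half_one_subset
  have hD := integral_half_one_two_mul_sub_one_mul_rpow ha
  rw [intervalIntegral.integral_congr (g := fun x => x ^ (a - 1) * (1 - x) ^ (a - 1)
      - 2 * (x ^ (a - 1) * (1 - x) ^ a)) (fun x hx => ?_),
    intervalIntegral.integral_sub hS (hA.const_mul 2), intervalIntegral.integral_const_mul,
    integral_half_one_rpow_mul_one_sub_rpow_self ha] at hD
  · field_simp at hD ⊢
    linarith
  · rw [uIcc_of_le (by norm_num)] at hx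
    have h0 : 0 ≤ x := by linarith [hx.1]
    have h1 : 0 ≤ 1 - x := by linarith [hx.2]
    have hsplit : (1 - x) ^ a = (1 - x) ^ (a - 1) * (1 - x) := by
      conv_lhs => rw [← sub_add_cancel a 1]
      rw [rpow_add' h1 (by linarith), rpow_one]
    simp only [mul_rpow h0 h1, hsplit]
    ring

lemma integrableOn_Ioi_one_rpow_mul_one_add_rpow_neg {p q : ℝ} (hq : 0 ≤ q) (hpq : p - q < -1) :
    IntegrableOn (fun u : ℝ => u ^ p * (1 + u) ^ (-q)) (Ioi 1) := by
  have hmajorant : IntegrableOn (fun u : ℝ => u ^ (p - q)) (Ioi 1) :=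
    integrableOn_Ioi_rpow_of_lt hpq one_pos
  refine hmajorant.mono' (by fun_prop) ?_
  filter_upwards [ae_restrict_mem measurableSet_Ioi] with u (hu : 1 < u)
  have hu0 : 0 < u := one_pos.trans hu
  rw [norm_of_nonneg (by positivity), sub_eq_add_neg, rpow_add hu0]
  exact mul_le_mul_of_nonneg_left
    (rpow_le_rpow_of_nonpos hu0 (by linarith) (neg_nonpos.2 hq)) (by positivity)

lemma integral_Ioi_one_rpow_mul_one_add_rpow_neg (p q : ℝ) :
    ∫ u in Ioi 1, u ^ p * (1 + u) ^ (-q) = ∫ b in (2⁻¹ : ℝ)..1, b ^ p * (1 - b) ^ (q - p - 2) := by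
  have himage : (fun b : ℝ => b / (1 - b)) '' Ioo 2⁻¹ 1 = Ioi 1 := by
    ext u
    simp only [mem_image, mem_Ioo, mem_Ioi]
    constructor
    · rintro ⟨b, ⟨hb1, hb2⟩, rfl⟩
      rw [lt_div_iff₀ (by linarith)]
      linarith
    · intro hu
      refine ⟨u / (1 + u), ⟨?_, ?_⟩, ?_⟩
      · rw [lt_div_iff₀ (by linarith)]; linarith
      · rw [div_lt_one (by linarith)]; linarith
      · field_simp
        ring
  have hderiv : ∀ b ∈ Ioo (2⁻¹ : ℝ) 1,
      HasDerivWithinAt (fun b : ℝ => b / (1 - b)) ((1 - b) ^ 2)⁻¹ (Ioo 2⁻¹ 1) b := by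
    intro b hb
    have h1b : 1 - b ≠ 0 := by linarith [hb.2]
    exact (((hasDerivAt_id' b).div ((hasDerivAt_id' b).const_sub 1) h1b).congr_deriv
      (by field_simp; ring)).hasDerivWithinAt
  have hinj : InjOn (fun b : ℝ => b / (1 - b)) (Ioo 2⁻¹ 1) := by
    intro x hx y hy hxy
    rw [div_eq_div_iff (by linarith [hx.2]) (by linarith [hy.2])] at hxy
    linarith
  rw [← himage, integral_image_eq_integral_abs_deriv_smul measurableSet_Ioo hderiv hinj,
    intervalIntegral.integral_of_le (by norm_num), integral_Ioc_eq_integral_Ioo]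
  refine setIntegral_congr_fun measurableSet_Ioo fun b ⟨hb1, hb2⟩ => ?_
  have hb : 0 < b := by linarith
  have hc : 0 < 1 - b := by linarith
  have hone_add : 1 + b / (1 - b) = (1 - b)⁻¹ := by field_simp; ring
  rw [smul_eq_mul, abs_of_pos (by positivity), hone_add, div_rpow hb.le hc.le, inv_rpow hc.le,
    ← rpow_neg hc.le, neg_neg, rpow_sub hc, rpow_sub hc, rpow_two]
  field_simp

lemma lintegral_setLIntegral_Iic_eq (μ ν : Measure ℝ) [SFinite μ] [SFinite ν] {f : ℝ → ℝ≥0∞}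
    (hf : Measurable f) :
    ∫⁻ x, ∫⁻ y in Iic x, f y ∂ν ∂μ = ∫⁻ y, f y * μ (Ici y) ∂ν := by
  have hmeas : Measurable ({p : ℝ × ℝ | p.2 ≤ p.1}.indicator fun p => f p.2) :=
    (hf.comp measurable_snd).indicator (measurableSet_le measurable_snd measurable_fst)
  calc ∫⁻ x, ∫⁻ y in Iic x, f y ∂ν ∂μ
      = ∫⁻ x, ∫⁻ y, {p : ℝ × ℝ | p.2 ≤ p.1}.indicator (fun p => f p.2) (x, y) ∂ν ∂μ := by
        refine lintegral_congr fun x => ?_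
        rw [← lintegral_indicator measurableSet_Iic]
        rfl
    _ = ∫⁻ y, ∫⁻ x, {p : ℝ × ℝ | p.2 ≤ p.1}.indicator (fun p => f p.2) (x, y) ∂μ ∂ν :=
        lintegral_lintegral_swap hmeas.aemeasurable
    _ = ∫⁻ y, f y * μ (Ici y) ∂ν := by
        refine lintegral_congr fun y => ?_
        rw [← lintegral_indicator_const measurableSet_Ici]
        rfl

lemma measurable_ofReal_mul_measure_Ioi (μ : Measure ℝ) :
    Measurable fun x => ENNReal.ofReal x * μ (Ioi x) :=
  ENNReal.measurable_ofReal.mul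
    (Antitone.measurable fun _ _ hxy => measure_mono (Ioi_subset_Ioi hxy))

lemma lintegral_ofReal_min_prod_self (μ : Measure ℝ) [SFinite μ] [NullSingletonClass μ] :
    ∫⁻ p, ENNReal.ofReal (min p.1 p.2) ∂μ.prod μ = 2 * ∫⁻ x, ENNReal.ofReal x * μ (Ioi x) ∂μ := by
  have hsplit : ∀ x, ∫⁻ y, ENNReal.ofReal (min x y) ∂μ
      = ∫⁻ y in Iic x, ENNReal.ofReal y ∂μ + ENNReal.ofReal x * μ (Ioi x) := by
    intro x
    rw [← lintegral_add_compl _ measurableSet_Iic, compl_Iic,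
      setLIntegral_congr_fun measurableSet_Iic fun y (hy : y ≤ x) => by rw [min_eq_right hy],
      setLIntegral_congr_fun measurableSet_Ioi fun y (hy : x < y) => by rw [min_eq_left hy.le],
      setLIntegral_const, mul_comm]
  rw [lintegral_prod _ (measurable_fst.min measurable_snd).ennreal_ofReal.aemeasurable,
    lintegral_congr hsplit, lintegral_add_right _ (measurable_ofReal_mul_measure_Ioi μ),
    lintegral_setLIntegral_Iic_eq μ μ ENNReal.measurable_ofReal, two_mul]
  congr 1
  refine lintegral_congr fun y => ?_
  rw [measure_congr Ioi_ae_eq_Ici]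

instance nullSingletonClass_gammaMeasure (a r : ℝ) : NullSingletonClass (gammaMeasure a r) := by
  unfold gammaMeasure
  infer_instance

lemma measurable_gammaPDF (a r : ℝ) : Measurable (gammaPDF a r) :=
  (measurable_gammaPDFReal a r).ennreal_ofReal

lemma ae_nonneg_gammaMeasure (a r : ℝ) : ∀ᵐ x ∂gammaMeasure a r, 0 ≤ x := by
  rw [gammaMeasure, ae_withDensity_iff (measurable_gammaPDF a r)]
  exact ae_of_all _ fun x hx => not_lt.1 fun hneg => hx (gammaPDF_of_neg hneg)

lemma setLIntegral_Ioi_eq_setLIntegral_Ioi_one {t : ℝ} (ht : 0 < t) (f : ℝ → ℝ≥0∞) :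
    ∫⁻ s in Ioi t, f s = ∫⁻ u in Ioi 1, ENNReal.ofReal t * f (t * u) := by
  have h := lintegral_image_eq_lintegral_abs_deriv_mul (measurableSet_Ioi (a := 1))
    (fun u _ => ((hasDerivAt_id' u).const_mul t).hasDerivWithinAt.congr_deriv (mul_one t))
    (mul_right_injective₀ ht.ne').injOn f
  rwa [image_mul_left_Ioi ht, mul_one, abs_of_pos ht] at h

lemma lintegral_sq_mul_gammaPDF_mul_gammaPDF {a r u : ℝ} (ha : 0 < a) (hr : 0 < r) (hu : 0 < u) :
    ∫⁻ t in Ioi 0, ENNReal.ofReal (t ^ 2) * (gammaPDF a r t * gammaPDF a r (t * u))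
      = ENNReal.ofReal (Gamma (2 * a + 1) / (r * Gamma a ^ 2)
          * (u ^ (a - 1) * (1 + u) ^ (-(2 * a + 1)))) := by
  have hb : 0 < r * (1 + u) := by positivity
  set C := (r ^ a / Gamma a) ^ 2 * u ^ (a - 1)
  have hpointwise : ∀ t ∈ Ioi (0 : ℝ),
      ENNReal.ofReal (t ^ 2) * (gammaPDF a r t * gammaPDF a r (t * u))
        = ENNReal.ofReal (C * (t ^ (2 * a + 1 - 1) * exp (-(r * (1 + u) * t)))) := by
    intro t (ht : 0 < t)
    rw [gammaPDF_of_nonneg ht.le, gammaPDF_of_nonneg (by positivity), ← ENNReal.ofReal_mul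
      (by positivity), ← ENNReal.ofReal_mul (by positivity)]
    congr 1
    have hpow : t ^ (2 * a + 1 - 1) = t ^ 2 * (t ^ (a - 1) * t ^ (a - 1)) := by
      rw [← rpow_add ht, ← rpow_natCast, ← rpow_add ht]
      ring_nf
    rw [hpow, mul_rpow ht.le hu.le, show -(r * (1 + u) * t) = -(r * t) + -(r * (t * u)) by ring,
      exp_add]
    ring
  have hint :
      IntegrableOn (fun t => C * (t ^ (2 * a + 1 - 1) * exp (-(r * (1 + u) * t)))) (Ioi 0) :=
    ((integrableOn_rpow_mul_exp_neg_mul_rpow (p := 1) (s := 2 * a + 1 - 1) (by linarith) one_pos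
      hb).congr_fun (fun t _ => by rw [rpow_one, neg_mul]) measurableSet_Ioi).const_mul C
  rw [setLIntegral_congr_fun measurableSet_Ioi hpointwise,
    ← ofReal_integral_eq_lintegral_ofReal hint
      (ae_restrict_of_forall_mem measurableSet_Ioi fun t (ht : 0 < t) => by positivity),
    integral_const_mul, integral_rpow_mul_exp_neg_mul_Ioi (by linarith) hb]
  congr 1
  have hr_pow : r ^ (2 * a + 1) = (r ^ a) ^ 2 * r := by
    rw [rpow_add hr, rpow_one, mul_comm 2 a, rpow_mul hr.le, rpow_two]
  rw [one_div, mul_inv, mul_rpow (by positivity) (by positivity), inv_rpow hr.le,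
    inv_rpow (by positivity), rpow_neg (by positivity), hr_pow]
  simp only [C]
  field_simp

lemma lintegral_ofReal_mul_gammaMeasure_Ioi {a r : ℝ} (ha : 0 < a) (hr : 0 < r) :
    ∫⁻ x, ENNReal.ofReal x * gammaMeasure a r (Ioi x) ∂gammaMeasure a r
      = ENNReal.ofReal (Gamma (2 * a + 1) / (r * Gamma a ^ 2)
          * ∫ u in Ioi 1, u ^ (a - 1) * (1 + u) ^ (-(2 * a + 1))) := by
  set g := gammaPDF a r
  set K := Gamma (2 * a + 1) / (r * Gamma a ^ 2)
  have hg : Measurable g := measurable_gammaPDF a r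
  have hF : Measurable fun p : ℝ × ℝ => ENNReal.ofReal (p.1 ^ 2) * (g p.1 * g (p.1 * p.2)) := by
    fun_prop
  calc ∫⁻ x, ENNReal.ofReal x * gammaMeasure a r (Ioi x) ∂gammaMeasure a r
      = ∫⁻ t in Ioi 0, g t * (ENNReal.ofReal t * ∫⁻ s in Ioi t, g s) := by
        rw [gammaMeasure, lintegral_withDensity_eq_lintegral_mul _ hg
          (measurable_ofReal_mul_measure_Ioi _), setLIntegral_eq_of_support_subset]
        · simp only [Pi.mul_apply, withDensity_apply _ measurableSet_Ioi]
          rfl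
        · intro t ht
          by_contra hneg
          simp [ENNReal.ofReal_of_nonpos (not_lt.1 hneg)] at ht
    _ = ∫⁻ t in Ioi 0, ∫⁻ u in Ioi 1, ENNReal.ofReal (t ^ 2) * (g t * g (t * u)) := by
        refine setLIntegral_congr_fun measurableSet_Ioi fun t (ht : 0 < t) => ?_
        rw [setLIntegral_Ioi_eq_setLIntegral_Ioi_one ht, ← mul_assoc,
          ← lintegral_const_mul _ (by fun_prop)]
        refine lintegral_congr fun u => ?_
        rw [pow_two, ENNReal.ofReal_mul ht.le]
        ring
    _ = ∫⁻ u in Ioi 1, ∫⁻ t in Ioi 0, ENNReal.ofReal (t ^ 2) * (g t * g (t * u)) :=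
        lintegral_lintegral_swap hF.aemeasurable
    _ = ∫⁻ u in Ioi 1, ENNReal.ofReal (K * (u ^ (a - 1) * (1 + u) ^ (-(2 * a + 1)))) :=
        setLIntegral_congr_fun measurableSet_Ioi fun u (hu : 1 < u) =>
          lintegral_sq_mul_gammaPDF_mul_gammaPDF ha hr (one_pos.trans hu)
    _ = ENNReal.ofReal (K * ∫ u in Ioi 1, u ^ (a - 1) * (1 + u) ^ (-(2 * a + 1))) := by
        rw [← integral_const_mul, ofReal_integral_eq_lintegral_ofReal
          ((integrableOn_Ioi_one_rpow_mul_one_add_rpow_neg (by linarith)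
            (by linarith)).const_mul K)]
        exact ae_restrict_of_forall_mem measurableSet_Ioi fun u (hu : 1 < u) => by
          have : 0 < u := one_pos.trans hu
          positivity

lemma Gamma_two_mul_mul_four_rpow_neg (a : ℝ) :
    Gamma (2 * a) * 4 ^ (-a) * (2 * √π) = Gamma a * Gamma (a + 1 / 2) := by
  have h2 : (2 : ℝ) ^ (1 - 2 * a) = 2 * 4 ^ (-a) := by
    rw [rpow_sub two_pos, rpow_one, show (4 : ℝ) = 2 ^ (2 : ℝ) by norm_num, ← rpow_mul two_pos.le,
      mul_neg, rpow_neg two_pos.le, div_eq_mul_inv]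
  rw [Gamma_mul_Gamma_add_half, h2]
  ring

lemma integral_min_gammaMeasure_prod {a r : ℝ} (ha : 0 < a) (hr : 0 < r) :
    ∫ p, min p.1 p.2 ∂(gammaMeasure a r).prod (gammaMeasure a r)
      = (a - Gamma (a + 1 / 2) / (√π * Gamma a)) / r := by
  have := isProbabilityMeasure_gammaMeasure ha hr
  have hnonneg : 0 ≤ᵐ[(gammaMeasure a r).prod (gammaMeasure a r)] fun p => min p.1 p.2 := by
    filter_upwards [Measure.quasiMeasurePreserving_fst.ae (ae_nonneg_gammaMeasure a r),
      Measure.quasiMeasurePreserving_snd.ae (ae_nonneg_gammaMeasure a r)] with p h1 h2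
    exact le_min h1 h2
  have hI : 0 ≤ ∫ u in Ioi (1 : ℝ), u ^ (a - 1) * (1 + u) ^ (-(2 * a + 1)) :=
    setIntegral_nonneg measurableSet_Ioi fun u (hu : 1 < u) => by
      have : 0 < u := one_pos.trans hu
      positivity
  have hΓ : 0 < Gamma a := Gamma_pos_of_pos ha
  rw [integral_eq_lintegral_of_nonneg_ae hnonneg (by fun_prop), lintegral_ofReal_min_prod_self,
    lintegral_ofReal_mul_gammaMeasure_Ioi ha hr, ← ENNReal.ofReal_ofNat 2,
    ← ENNReal.ofReal_mul zero_le_two, ENNReal.toReal_ofReal (by positivity),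
    integral_Ioi_one_rpow_mul_one_add_rpow_neg, show 2 * a + 1 - (a - 1) - 2 = a by ring,
    integral_half_one_rpow_mul_one_sub_rpow ha, beta, ← two_mul, Gamma_add_one (by positivity),
    eq_div_of_mul_eq hΓ.ne' ((mul_comm _ _).trans (Gamma_two_mul_mul_four_rpow_neg a).symm)]
  have hΓ2 : 0 < Gamma (2 * a) := Gamma_pos_of_pos (by linarith)
  have hπ : 0 < √π := sqrt_pos.2 pi_pos
  field_simp
  ring

/-- If `X, Y` are i.i.d. Gamma(shape `α`, scale `θ`) random variables, then
`E[min{X,Y}] = θα − (θ/√π) Γ(α+1/2)/Γ(α)`. -/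
theorem min_gamma_mean {Ω : Type*} [MeasureSpace Ω] [IsProbabilityMeasure (ℙ : Measure Ω)]
    (X Y : Ω → ℝ) (α θ : ℝ) (hα : 0 < α) (hθ : 0 < θ)
    (hX : Measure.map X ℙ = gammaMeasure α θ⁻¹)
    (hY : Measure.map Y ℙ = gammaMeasure α θ⁻¹)
    (hindep : IndepFun X Y ℙ) :
    ∫ ω, min (X ω) (Y ω) ∂ℙ =
      θ * α - (θ / Real.sqrt π) * (Real.Gamma (α + 1/2) / Real.Gamma α) := by
  have := isProbabilityMeasure_gammaMeasure hα (inv_pos.2 hθ)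
  have hXm : AEMeasurable X ℙ := aemeasurable_of_map_neZero (hX ▸ inferInstance)
  have hYm : AEMeasurable Y ℙ := aemeasurable_of_map_neZero (hY ▸ inferInstance)
  have hmap := integral_map (hXm.prodMk hYm)
    (f := fun p : ℝ × ℝ => min p.1 p.2) (by fun_prop)
  rw [← hmap, (indepFun_iff_map_prod_eq_prod_map_map hXm hYm).1 hindep, hX, hY,
    integral_min_gammaMeasure_prod hα (inv_pos.2 hθ)]
  have hΓ : 0 < Gamma α := Gamma_pos_of_pos hα
  have hπ : 0 < √π := sqrt_pos.2 pi_pos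
  field_simp
end

section
/- Let X and Y be i.i.d. InverseGamma(α, θ) random variables with α > 1, θ > 0. Then E[min{X,Y}] = (θ^(−1)/(α−1)) · [1 − (1/√π) · Γ(α − 1/2)/Γ(α)]. -/
/-!
With `U = X⁻¹`, `V = Y⁻¹` i.i.d. of law Gamma(α, r), `r = θ⁻¹`, we have `min X Y = (max U V)⁻¹`,
and splitting according to which of `U, V` is larger gives
`E[(max U V)⁻¹] = 2 ∫ u⁻¹ P(V < u) dP_U(u)`. Substituting `v = w u` in `P(V < u)` and integrating
`u` out first (a Gamma integral) leaves `2 r Γ(2α-1)/Γ(α)² ∫₀¹ w^(α-1) (1+w)^(1-2α) dw`, and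
`t = w/(1+w)` turns this into the half Beta integral `∫₀^{1/2} t^(α-1) (1-t)^(α-2) dt`. After the
reflection `t ↦ 1 - t` it is half of `B(α-1, α)` minus the boundary term `4^(1-α)/(α-1)` of the
antiderivative `(t(1-t))^(α-1)`, and Legendre's duplication formula turns the result into
`Γ(α - 1/2)/(√π Γ(α))`.
-/

open MeasureTheory ProbabilityTheory Real Set intervalIntegral
open scoped ENNReal

lemma integral_rpow_mul_one_sub_rpow_s4 {a b : ℝ} (ha : 0 < a) (hb : 0 < b) :
    ∫ t in (0 : ℝ)..1, t ^ (a - 1) * (1 - t) ^ (b - 1) = Gamma a * Gamma b / Gamma (a + b) := by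
  have hbeta :
      Complex.betaIntegral a b = ↑(∫ t in (0 : ℝ)..1, t ^ (a - 1) * (1 - t) ^ (b - 1)) := by
    rw [Complex.betaIntegral, ← integral_ofReal]
    refine integral_congr fun t ht => ?_
    rw [uIcc_of_le zero_le_one] at ht
    push_cast
    rw [Complex.ofReal_cpow ht.1, Complex.ofReal_cpow (by linarith [ht.2])]
    push_cast
    ring
  have h := Complex.Gamma_mul_Gamma_eq_betaIntegral (s := a) (t := b) (by simpa using ha)
    (by simpa using hb)
  rw [hbeta, ← Complex.ofReal_add, Complex.Gamma_ofReal, Complex.Gamma_ofReal,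
    Complex.Gamma_ofReal] at h
  rw [eq_div_iff (Gamma_pos_of_pos (by linarith)).ne', mul_comm]
  exact_mod_cast h.symm

lemma intervalIntegrable_rpow_mul_one_sub_rpow_zero_half {p q : ℝ} (hp : -1 < p) :
    IntervalIntegrable (fun t : ℝ => t ^ p * (1 - t) ^ q) volume 0 (1 / 2) := by
  refine (intervalIntegrable_rpow' hp).mul_continuousOn
    (ContinuousOn.rpow_const (by fun_prop) fun t ht => Or.inl ?_)
  rw [uIcc_of_le (by norm_num)] at ht
  linarith [ht.2]

lemma intervalIntegrable_rpow_mul_one_sub_rpow_half_one {p q : ℝ} (hq : -1 < q) :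
    IntervalIntegrable (fun t : ℝ => t ^ p * (1 - t) ^ q) volume (1 / 2) 1 := by
  have := (intervalIntegrable_rpow_mul_one_sub_rpow_zero_half (q := p) hq).comp_sub_left 1
  norm_num at this
  simpa only [mul_comm] using this.symm

lemma integral_rpow_mul_one_sub_rpow_sub_swap {a : ℝ} (ha : 0 < a) :
    (∫ t in (0 : ℝ)..1 / 2, t ^ (a - 1) * (1 - t) ^ a)
      - ∫ t in (0 : ℝ)..1 / 2, t ^ a * (1 - t) ^ (a - 1) = 4⁻¹ ^ a / a := by
  rw [← integral_sub (intervalIntegrable_rpow_mul_one_sub_rpow_zero_half (by linarith))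
    (intervalIntegrable_rpow_mul_one_sub_rpow_zero_half (by linarith))]
  have hderiv : ∀ t ∈ Ioo (0 : ℝ) (1 / 2), HasDerivWithinAt (fun t => t ^ a * (1 - t) ^ a / a)
      (t ^ (a - 1) * (1 - t) ^ a - t ^ a * (1 - t) ^ (a - 1)) (Ioi t) t := by
    intro t ht
    have h1 := (hasDerivAt_id' t).rpow_const (p := a) (Or.inl ht.1.ne')
    have h2 := ((hasDerivAt_id' t).const_sub 1).rpow_const (p := a) (Or.inl (by linarith [ht.2]))
    refine (((h1.mul h2).div_const a).congr_deriv ?_).hasDerivWithinAt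
    field_simp
    ring
  have hcont : ContinuousOn (fun t : ℝ => t ^ a * (1 - t) ^ a / a) (Icc 0 (1 / 2)) := by
    have := continuous_rpow_const ha.le
    fun_prop
  rw [integral_eq_sub_of_hasDeriv_right_of_le (by norm_num) hcont hderiv
    ((intervalIntegrable_rpow_mul_one_sub_rpow_zero_half (by linarith)).sub
      (intervalIntegrable_rpow_mul_one_sub_rpow_zero_half (by linarith))),
    zero_rpow ha.ne', zero_mul, zero_div, sub_zero, ← mul_rpow (by norm_num) (by norm_num)]
  norm_num

lemma integral_rpow_mul_one_sub_rpow_zero_half {a : ℝ} (ha : 0 < a) :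
    ∫ t in (0 : ℝ)..1 / 2, t ^ a * (1 - t) ^ (a - 1)
      = (Gamma a * Gamma (a + 1) / Gamma (2 * a + 1) - 4⁻¹ ^ a / a) / 2 := by
  have hbeta := integral_rpow_mul_one_sub_rpow_s4 ha (b := a + 1) (by linarith)
  rw [add_sub_cancel_right, show a + (a + 1) = 2 * a + 1 by ring,
    ← integral_add_adjacent_intervals (b := 1 / 2)
      (intervalIntegrable_rpow_mul_one_sub_rpow_zero_half (by linarith))
      (intervalIntegrable_rpow_mul_one_sub_rpow_half_one (by linarith))] at hbeta
  have hreflect : ∫ t in (1 / 2 : ℝ)..1, t ^ (a - 1) * (1 - t) ^ a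
      = ∫ t in (0 : ℝ)..1 / 2, t ^ a * (1 - t) ^ (a - 1) := by
    have := integral_comp_sub_left (fun t : ℝ => t ^ (a - 1) * (1 - t) ^ a) 1 (a := 0) (b := 1 / 2)
    norm_num at this
    rw [← this]
    exact integral_congr fun t _ => mul_comm _ _
  linarith [integral_rpow_mul_one_sub_rpow_sub_swap ha]

lemma setLIntegral_Ioo_zero_half_ofReal_rpow_mul {a : ℝ} (ha : -1 < a) :
    ∫⁻ t in Ioo 0 (1 / 2), ENNReal.ofReal (t ^ a * (1 - t) ^ (a - 1))
      = ENNReal.ofReal (∫ t in (0 : ℝ)..1 / 2, t ^ a * (1 - t) ^ (a - 1)) := by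
  rw [integral_of_le (by norm_num), integral_Ioc_eq_integral_Ioo,
    ofReal_integral_eq_lintegral_ofReal]
  · exact (intervalIntegrable_rpow_mul_one_sub_rpow_zero_half ha).1.mono_set
      Ioo_subset_Ioc_self
  · refine (ae_restrict_mem measurableSet_Ioo).mono fun t ht => ?_
    have : 0 < 1 - t := by linarith [ht.2]
    exact mul_nonneg (rpow_nonneg ht.1.le _) (rpow_nonneg this.le _)

lemma Gamma_two_mul_add_one_mul_inv_four_rpow (a : ℝ) :
    Gamma (2 * a + 1) * 4⁻¹ ^ a = Gamma (a + 1 / 2) * Gamma (a + 1) / √π := by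
  have h := Gamma_mul_Gamma_add_half (a + 1 / 2)
  rw [show a + 1 / 2 + 1 / 2 = a + 1 by ring, show 2 * (a + 1 / 2) = 2 * a + 1 by ring,
    show 1 - (2 * a + 1) = -2 * a by ring] at h
  have h4 : (4⁻¹ : ℝ) ^ a = 2 ^ (-2 * a) := by
    rw [neg_mul, rpow_neg zero_le_two, rpow_mul zero_le_two, ← inv_rpow (by positivity)]
    norm_num
  rw [h, h4, eq_div_iff (by positivity)]

lemma setLIntegral_Ioo_zero_eq_mul_comp_mul_right {u : ℝ} (hu : 0 < u) (G : ℝ → ℝ≥0∞) :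
    ∫⁻ v in Ioo 0 u, G v = ENNReal.ofReal u * ∫⁻ w in Ioo 0 1, G (w * u) := by
  have := lintegral_image_eq_lintegral_abs_deriv_mul (measurableSet_Ioo (a := (0 : ℝ)) (b := 1))
    (fun w _ => (hasDerivAt_mul_const u).hasDerivWithinAt) (mul_left_injective₀ hu.ne').injOn G
  rw [image_mul_right_Ioo _ _ hu, zero_mul, one_mul, abs_of_pos hu] at this
  rw [this, lintegral_const_mul' _ _ ENNReal.ofReal_ne_top]

lemma setLIntegral_Ioo_zero_one_rpow_mul_one_add_rpow (p q : ℝ) :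
    ∫⁻ w in Ioo 0 1, ENNReal.ofReal (w ^ p * (1 + w) ^ (-(p + q + 2)))
      = ∫⁻ t in Ioo 0 (1 / 2), ENNReal.ofReal (t ^ p * (1 - t) ^ q) := by
  have himage : (fun w : ℝ => w / (1 + w)) '' Ioo 0 1 = Ioo 0 (1 / 2) := by
    ext t
    constructor
    · rintro ⟨w, ⟨hw0, hw1⟩, rfl⟩
      refine ⟨by positivity, ?_⟩
      rw [div_lt_iff₀ (by linarith)]
      linarith
    · rintro ⟨ht0, ht1⟩
      refine ⟨t / (1 - t), ⟨div_pos ht0 (by linarith), ?_⟩, ?_⟩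
      · rw [div_lt_one (by linarith)]; linarith
      · have : 1 - t ≠ 0 := by linarith
        field_simp
        ring
  have hderiv : ∀ w ∈ Ioo (0 : ℝ) 1,
      HasDerivWithinAt (fun w : ℝ => w / (1 + w)) (((1 + w) ^ 2)⁻¹) (Ioo 0 1) w := by
    intro w hw
    have h1w : 1 + w ≠ 0 := by linarith [hw.1]
    refine (((hasDerivAt_id' w).div ((hasDerivAt_id' w).const_add 1) h1w).congr_deriv
      ?_).hasDerivWithinAt
    field_simp
    ring
  have hinj : InjOn (fun w : ℝ => w / (1 + w)) (Ioo 0 1) := by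
    intro x hx y hy hxy
    have h1 : 1 + x ≠ 0 := by linarith [hx.1]
    have h2 : 1 + y ≠ 0 := by linarith [hy.1]
    simp only at hxy
    field_simp at hxy
    linarith
  rw [← himage, lintegral_image_eq_lintegral_abs_deriv_mul measurableSet_Ioo hderiv hinj]
  refine setLIntegral_congr_fun measurableSet_Ioo fun w hw => ?_
  have h1w : 0 < 1 + w := by linarith [hw.1]
  rw [abs_of_pos (by positivity), ← ENNReal.ofReal_mul (by positivity)]
  congr 1
  have hsub : 1 - w / (1 + w) = (1 + w)⁻¹ := by field_simp; ring
  have hexp : (1 + w) ^ (-(p + q + 2))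
      = ((1 + w) ^ 2)⁻¹ * ((1 + w) ^ p)⁻¹ * ((1 + w) ^ q)⁻¹ := by
    rw [← rpow_natCast, ← rpow_neg h1w.le, ← rpow_neg h1w.le, ← rpow_neg h1w.le, ← rpow_add h1w,
      ← rpow_add h1w]
    push_cast
    ring_nf
  rw [hsub, div_rpow hw.1.le h1w.le, inv_rpow h1w.le, hexp]
  ring

lemma lintegral_rpow_mul_exp_neg_mul_Ioi {s b : ℝ} (hs : 0 < s) (hb : 0 < b) :
    ∫⁻ u in Ioi 0, ENNReal.ofReal (u ^ (s - 1) * exp (-(b * u)))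
      = ENNReal.ofReal (Gamma s / b ^ s) := by
  have hint : IntegrableOn (fun u : ℝ => u ^ (s - 1) * exp (-(b * u))) (Ioi 0) := by
    simpa [rpow_one, neg_mul] using
      integrableOn_rpow_mul_exp_neg_mul_rpow (p := 1) (by linarith : -1 < s - 1) one_pos hb
  rw [← ofReal_integral_eq_lintegral_ofReal hint, integral_rpow_mul_exp_neg_mul_Ioi hs hb,
    div_rpow zero_le_one hb.le, one_rpow, one_div_mul_eq_div]
  exact (ae_restrict_mem measurableSet_Ioi).mono fun u (hu : 0 < u) => by positivity

theorem lintegral_comp_max_prod_self {α : Type*} [LinearOrder α] [TopologicalSpace α]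
    [OrderClosedTopology α] [SecondCountableTopology α] [MeasurableSpace α]
    [OpensMeasurableSpace α] {μ : Measure α} [SFinite μ] [NullSingletonClass μ]
    {f : α → ℝ≥0∞} (hf : Measurable f) :
    ∫⁻ p, f (max p.1 p.2) ∂μ.prod μ = 2 * ∫⁻ u, f u * μ (Iio u) ∂μ := by
  let S (s : α → Set α) : α × α → ℝ≥0∞ := {p | p.2 ∈ s p.1}.indicator fun p => f p.1
  have measurable_S (s : α → Set α) (hs : MeasurableSet {p : α × α | p.2 ∈ s p.1}) :
      Measurable (S s) :=
    (hf.comp measurable_fst).indicator hs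
  have lintegral_S (s : α → Set α) (hs : MeasurableSet {p : α × α | p.2 ∈ s p.1}) :
      ∫⁻ p, S s p ∂μ.prod μ = ∫⁻ u, f u * μ (s u) ∂μ := by
    rw [lintegral_prod _ (measurable_S s hs).aemeasurable]
    refine lintegral_congr fun u => ?_
    have hsu : MeasurableSet (s u) := measurable_prodMk_left hs
    rw [← setLIntegral_const, ← lintegral_indicator hsu]
    rfl
  have hIio : MeasurableSet {p : α × α | p.2 ∈ Iio p.1} :=
    measurableSet_lt measurable_snd measurable_fst
  have hIic : MeasurableSet {p : α × α | p.2 ∈ Iic p.1} :=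
    measurableSet_le measurable_snd measurable_fst
  have hmax : ∀ p : α × α, f (max p.1 p.2) = S Iic p + S Iio p.swap := by
    rintro ⟨x, y⟩
    rcases le_or_gt y x with h | h
    · simp [S, h, not_lt.mpr h]
    · simp [S, h, max_eq_right h.le, not_le.mpr h]
  have hswap : ∫⁻ p, S Iio p.swap ∂μ.prod μ = ∫⁻ p, S Iio p ∂μ.prod μ := by
    rw [← Measure.prod_swap, lintegral_map (measurable_S _ hIio) measurable_swap,
      Measure.prod_swap]
  simp_rw [hmax]
  rw [lintegral_add_left (measurable_S _ hIic), hswap, lintegral_S _ hIic, lintegral_S _ hIio,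
    two_mul]
  simp_rw [measure_congr (Iio_ae_eq_Iic (μ := μ))]

theorem integral_min_eq_integral_inv_max_prod {Ω : Type*} [MeasureSpace Ω]
    [IsProbabilityMeasure (ℙ : Measure Ω)] {X Y : Ω → ℝ} {μ ν : Measure ℝ} [NeZero μ] [NeZero ν]
    (hX : Measure.map (fun ω => (X ω)⁻¹) ℙ = μ) (hY : Measure.map (fun ω => (Y ω)⁻¹) ℙ = ν)
    (hindep : IndepFun X Y ℙ) (hμ : ∀ᵐ u ∂μ, 0 < u) (hν : ∀ᵐ u ∂ν, 0 < u) :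
    ∫ ω, min (X ω) (Y ω) ∂ℙ = ∫ p, (max p.1 p.2)⁻¹ ∂μ.prod ν := by
  have hXm : AEMeasurable (fun ω => (X ω)⁻¹) ℙ := .of_map_ne_zero (hX ▸ NeZero.ne μ)
  have hYm : AEMeasurable (fun ω => (Y ω)⁻¹) ℙ := .of_map_ne_zero (hY ▸ NeZero.ne ν)
  have hpair : Measure.map (fun ω => ((X ω)⁻¹, (Y ω)⁻¹)) ℙ = μ.prod ν := by
    rw [(indepFun_iff_map_prod_eq_prod_map_map hXm hYm).mp
      (hindep.comp measurable_inv measurable_inv), hX, hY]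
  have hpos : ∀ᵐ p ∂μ.prod ν, 0 < p.1 ∧ 0 < p.2 :=
    (Measure.quasiMeasurePreserving_fst.ae hμ).and (Measure.quasiMeasurePreserving_snd.ae hν)
  have hmin : Measurable fun p : ℝ × ℝ => min p.1⁻¹ p.2⁻¹ := by fun_prop
  calc ∫ ω, min (X ω) (Y ω) ∂ℙ = ∫ p, min p.1⁻¹ p.2⁻¹ ∂μ.prod ν := by
        simp [← hpair, integral_map (hXm.prodMk hYm) hmin.aestronglyMeasurable]
    _ = ∫ p, (max p.1 p.2)⁻¹ ∂μ.prod ν := by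
        refine integral_congr_ae (hpos.mono fun p hp => ?_)
        rcases le_total p.1 p.2 with h | h
        · simp [max_eq_right h, min_eq_right (inv_anti₀ hp.1 h)]
        · simp [max_eq_left h, min_eq_left (inv_anti₀ hp.2 h)]

namespace ProbabilityTheory

lemma gammaMeasure_eq_withDensity_restrict_Ioi (a r : ℝ) :
    gammaMeasure a r = (volume.restrict (Ioi 0)).withDensity (gammaPDF a r) := by
  rw [Measure.restrict_congr_set Ioi_ae_eq_Ici, ← withDensity_indicator measurableSet_Ici,
    gammaMeasure]
  congr 1
  ext x
  by_cases hx : 0 ≤ x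
  · simp [hx]
  · simp [hx, gammaPDF_of_neg (not_le.mp hx)]

instance (a r : ℝ) : SFinite (gammaMeasure a r) := by
  unfold gammaMeasure; infer_instance

instance (a r : ℝ) : NullSingletonClass (gammaMeasure a r) := by
  unfold gammaMeasure; infer_instance

lemma ae_pos_gammaMeasure (a r : ℝ) : ∀ᵐ u ∂gammaMeasure a r, 0 < u := by
  rw [gammaMeasure_eq_withDensity_restrict_Ioi]
  exact (withDensity_absolutelyContinuous _ _).ae_le (ae_restrict_mem measurableSet_Ioi)

lemma lintegral_gammaMeasure (a r : ℝ) (φ : ℝ → ℝ≥0∞) :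
    ∫⁻ u, φ u ∂gammaMeasure a r = ∫⁻ u in Ioi 0, gammaPDF a r u * φ u := by
  have hpdf : Measurable (gammaPDF a r) := (measurable_gammaPDFReal a r).ennreal_ofReal
  rw [gammaMeasure_eq_withDensity_restrict_Ioi,
    lintegral_withDensity_eq_lintegral_mul_non_measurable _ hpdf
      (ae_of_all _ fun _ => ENNReal.ofReal_lt_top)]
  rfl

lemma gammaMeasure_Iio (a r u : ℝ) :
    gammaMeasure a r (Iio u) = ∫⁻ v in Ioo 0 u, gammaPDF a r v := by
  rw [gammaMeasure_eq_withDensity_restrict_Ioi, withDensity_apply _ measurableSet_Iio,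
    Measure.restrict_restrict measurableSet_Iio, Iio_inter_Ioi]

lemma gammaPDF_mul_gammaPDF_mul {a r u w : ℝ} (ha : 0 < a) (hr : 0 < r) (hu : 0 < u)
    (hw : 0 < w) :
    gammaPDF a r u * gammaPDF a r (w * u) = ENNReal.ofReal ((r ^ a / Gamma a) ^ 2 * w ^ (a - 1)) *
      ENNReal.ofReal (u ^ (2 * a - 1 - 1) * exp (-(r * (1 + w) * u))) := by
  rw [gammaPDF_of_nonneg hu.le, gammaPDF_of_nonneg (by positivity),
    ← ENNReal.ofReal_mul (by positivity), ← ENNReal.ofReal_mul (by positivity)]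
  congr 1
  have hexp : exp (-(r * u)) * exp (-(r * (w * u))) = exp (-(r * (1 + w) * u)) := by
    rw [← exp_add]; ring_nf
  have hpow : u ^ (a - 1) * u ^ (a - 1) = u ^ (2 * a - 1 - 1) := by
    rw [← rpow_add hu]; ring_nf
  rw [mul_rpow hw.le hu.le, ← hexp, ← hpow]
  ring

lemma lintegral_gammaPDF_mul_gammaPDF_mul {a r w : ℝ} (ha : 1 / 2 < a) (hr : 0 < r)
    (hw : 0 < w) :
    ∫⁻ u in Ioi 0, gammaPDF a r u * gammaPDF a r (w * u)
      = ENNReal.ofReal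
          (r * Gamma (2 * a - 1) / Gamma a ^ 2 * (w ^ (a - 1) * (1 + w) ^ (1 - 2 * a))) := by
  rw [setLIntegral_congr_fun measurableSet_Ioi fun u hu =>
      gammaPDF_mul_gammaPDF_mul (by linarith) hr hu hw,
    lintegral_const_mul' _ _ ENNReal.ofReal_ne_top,
    lintegral_rpow_mul_exp_neg_mul_Ioi (by linarith) (by positivity),
    ← ENNReal.ofReal_mul (by positivity)]
  congr 1
  have h1w : 0 < 1 + w := by linarith
  have hr2 : (r ^ a) ^ 2 = r * r ^ (2 * a - 1) := by
    rw [← rpow_mul_natCast hr.le, ← rpow_one_add' hr.le (by linarith)]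
    ring_nf
  rw [mul_rpow hr.le h1w.le, div_pow, hr2, show 1 - 2 * a = -(2 * a - 1) by ring,
    rpow_neg h1w.le]
  have := (rpow_pos_of_pos hr (2 * a - 1)).ne'
  have := (rpow_pos_of_pos h1w (2 * a - 1)).ne'
  field_simp

lemma lintegral_inv_mul_gammaMeasure_Iio (a r : ℝ) :
    ∫⁻ u, ENNReal.ofReal u⁻¹ * gammaMeasure a r (Iio u) ∂gammaMeasure a r
      = ∫⁻ w in Ioo 0 1, ∫⁻ u in Ioi 0, gammaPDF a r u * gammaPDF a r (w * u) := by
  have hpdf : Measurable (gammaPDF a r) := (measurable_gammaPDFReal a r).ennreal_ofReal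
  rw [lintegral_gammaMeasure]
  calc _ = ∫⁻ u in Ioi 0, ∫⁻ w in Ioo 0 1, gammaPDF a r u * gammaPDF a r (w * u) := by
        refine setLIntegral_congr_fun measurableSet_Ioi fun u (hu : 0 < u) => ?_
        rw [gammaMeasure_Iio, setLIntegral_Ioo_zero_eq_mul_comp_mul_right hu,
          ← mul_assoc (ENNReal.ofReal u⁻¹),
          ← ENNReal.ofReal_mul (inv_nonneg.2 hu.le), inv_mul_cancel₀ hu.ne', ENNReal.ofReal_one,
          one_mul]
        exact (lintegral_const_mul' _ _ ENNReal.ofReal_ne_top).symm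
    _ = _ := lintegral_lintegral_swap ((hpdf.comp measurable_fst).mul
          (hpdf.comp (measurable_snd.mul measurable_fst))).aemeasurable

/-- The half Beta integral is left unevaluated: in this form the value is visibly nonnegative. -/
theorem lintegral_inv_max_gammaMeasure_prod {α r : ℝ} (hα : 1 < α) (hr : 0 < r) :
    ∫⁻ p, ENNReal.ofReal (max p.1 p.2)⁻¹ ∂(gammaMeasure α r).prod (gammaMeasure α r)
      = ENNReal.ofReal (2 * (r * Gamma (2 * α - 1) / Gamma α ^ 2 *
          ∫ t in (0 : ℝ)..1 / 2, t ^ (α - 1) * (1 - t) ^ (α - 1 - 1))) := by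
  have hK : 0 ≤ r * Gamma (2 * α - 1) / Gamma α ^ 2 := by
    have := Gamma_pos_of_pos (by linarith : 0 < 2 * α - 1)
    positivity
  rw [lintegral_comp_max_prod_self measurable_inv.ennreal_ofReal,
    lintegral_inv_mul_gammaMeasure_Iio,
    setLIntegral_congr_fun measurableSet_Ioo fun w hw =>
      lintegral_gammaPDF_mul_gammaPDF_mul (by linarith) hr hw.1]
  simp_rw [ENNReal.ofReal_mul hK]
  rw [lintegral_const_mul' _ _ ENNReal.ofReal_ne_top,
    show 1 - 2 * α = -((α - 1) + (α - 1 - 1) + 2) by ring,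
    setLIntegral_Ioo_zero_one_rpow_mul_one_add_rpow,
    setLIntegral_Ioo_zero_half_ofReal_rpow_mul (by linarith), ← ENNReal.ofReal_mul hK,
    ← ENNReal.ofReal_ofNat 2, ← ENNReal.ofReal_mul zero_le_two]

theorem integral_inv_max_gammaMeasure_prod {α r : ℝ} (hα : 1 < α) (hr : 0 < r) :
    ∫ p, (max p.1 p.2)⁻¹ ∂(gammaMeasure α r).prod (gammaMeasure α r)
      = r / (α - 1) * (1 - 1 / √π * (Gamma (α - 1 / 2) / Gamma α)) := by
  have hpos : ∀ᵐ p ∂(gammaMeasure α r).prod (gammaMeasure α r), 0 < p.1 :=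
    Measure.quasiMeasurePreserving_fst.ae (ae_pos_gammaMeasure α r)
  have hM : 0 ≤ ∫ t in (0 : ℝ)..1 / 2, t ^ (α - 1) * (1 - t) ^ (α - 1 - 1) :=
    integral_nonneg (by norm_num) fun t ht =>
      mul_nonneg (rpow_nonneg ht.1 _) (rpow_nonneg (by linarith [ht.2]) _)
  have := Gamma_pos_of_pos (by linarith : 0 < 2 * α - 1)
  rw [integral_eq_lintegral_of_nonneg_ae
      (hpos.mono fun p hp => inv_nonneg.2 (hp.le.trans (le_max_left _ _)))
      (measurable_fst.max measurable_snd).inv.aestronglyMeasurable,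
    lintegral_inv_max_gammaMeasure_prod hα hr, ENNReal.toReal_ofReal (by positivity),
    integral_rpow_mul_one_sub_rpow_zero_half (by linarith), sub_add_cancel,
    show 2 * (α - 1) + 1 = 2 * α - 1 by ring]
  have hdup := Gamma_two_mul_add_one_mul_inv_four_rpow (α - 1)
  rw [show 2 * (α - 1) + 1 = 2 * α - 1 by ring, show α - 1 + 1 / 2 = α - 1 / 2 by ring,
    sub_add_cancel] at hdup
  have hΓ : Gamma α = (α - 1) * Gamma (α - 1) := by
    simpa using Gamma_add_one (by linarith : α - 1 ≠ 0)
  have := Gamma_pos_of_pos (by linarith : 0 < α - 1)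
  have : α - 1 ≠ 0 := by linarith
  rw [hΓ] at hdup ⊢
  field_simp at hdup ⊢
  linear_combination -hdup

end ProbabilityTheory

/-- If `X, Y` are i.i.d. InverseGamma(shape `α > 1`, scale `θ`) random variables
(i.e. `1/X` is Gamma with shape `α` and scale `θ`, that is rate `θ⁻¹`), then
`E[min{X,Y}] = (θ⁻¹/(α−1)) (1 − Γ(α−1/2)/(√π Γ(α)))`. -/
theorem min_invGamma_mean {Ω : Type*} [MeasureSpace Ω]
    [IsProbabilityMeasure (ℙ : Measure Ω)]
    (X Y : Ω → ℝ) (α θ : ℝ) (hα : 1 < α) (hθ : 0 < θ)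
    (hX : Measure.map (fun ω => (X ω)⁻¹) ℙ = gammaMeasure α θ⁻¹)
    (hY : Measure.map (fun ω => (Y ω)⁻¹) ℙ = gammaMeasure α θ⁻¹)
    (hindep : IndepFun X Y ℙ) :
    ∫ ω, min (X ω) (Y ω) ∂ℙ =
      θ⁻¹ / (α - 1) * (1 - (1 / Real.sqrt π) * (Real.Gamma (α - 1/2) / Real.Gamma α)) := by
  have := isProbabilityMeasure_gammaMeasure (by linarith : 0 < α) (inv_pos.mpr hθ)
  rw [integral_min_eq_integral_inv_max_prod hX hY hindep (ae_pos_gammaMeasure _ _)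
    (ae_pos_gammaMeasure _ _), integral_inv_max_gammaMeasure_prod hα (inv_pos.mpr hθ)]
end

section
/- Let X and Y be i.i.d. lognormal random variables with parameters μ ∈ ℝ and σ > 0 (i.e., log X ~ N(μ, σ²)). Then for every a > 0, E[(min{X,Y})^a] = 2 e^(aμ + (aσ)²/2) Φ(−aσ/√2), where Φ is the standard normal c.d.f. -/
open MeasureTheory ProbabilityTheory Real

/-- The standard normal cumulative distribution function. -/
noncomputable def stdNormalCDF (z : ℝ) : ℝ :=
  ∫ t in Set.Iic z, Real.exp (-t ^ 2 / 2) / Real.sqrt (2 * π)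

/-!
With `S = Z₁ + Z₂` and `D = Z₁ - Z₂` we have `min Z₁ Z₂ = (S - |D|) / 2`. The pair `(S, D)` is
Gaussian and uncorrelated, hence independent, and both are `N(0, 2)`. So `E[e^{c min Z₁ Z₂}]`
factors as the moment generating function of `S` times `E[e^{-c|D|/2}]`, and completing the
square in the latter produces `Φ`.
-/

open Set
open scoped NNReal

lemma stdNormalCDF_eq_setIntegral_gaussianPDFReal (z : ℝ) :
    stdNormalCDF z = ∫ t in Iic z, gaussianPDFReal 0 1 t := by
  simp [stdNormalCDF, gaussianPDFReal, div_eq_inv_mul]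

lemma gaussianPDFReal_neg (μ : ℝ) (v : ℝ≥0) (x : ℝ) :
    gaussianPDFReal μ v (-x) = gaussianPDFReal (-μ) v x := by
  unfold gaussianPDFReal
  ring_nf

lemma gaussianPDFReal_mul_exp (μ : ℝ) (v : ℝ≥0) (s x : ℝ) :
    gaussianPDFReal μ v x * exp (s * x) =
      exp (μ * s + v * s ^ 2 / 2) * gaussianPDFReal (μ + v * s) v x := by
  rcases eq_or_ne v 0 with rfl | hv
  · simp [gaussianPDFReal_zero_var]
  have hv' : (v : ℝ) ≠ 0 := by exact_mod_cast hv
  simp only [gaussianPDFReal]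
  rw [mul_assoc, ← exp_add, mul_left_comm, ← exp_add]
  congr 2
  field_simp
  ring

lemma setIntegral_Ioi_comp_add_right {E : Type*} [NormedAddCommGroup E] [NormedSpace ℝ E]
    (f : ℝ → E) (a t : ℝ) : ∫ x in Ioi a, f (x + t) = ∫ x in Ioi (a + t), f x := by
  have h := (measurePreserving_add_right volume t).setIntegral_preimage_emb
    (measurableEmbedding_addRight t) f (Ioi (a + t))
  rwa [preimage_add_const_Ioi, add_sub_cancel_right] at h

lemma integral_exp_neg_mul_abs_gaussianReal_zero_one (t : ℝ) :
    ∫ x, exp (-t * |x|) ∂gaussianReal 0 1 = 2 * exp (t ^ 2 / 2) * stdNormalCDF (-t) := by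
  have heven : ∀ x, gaussianPDFReal 0 1 x • exp (-t * |x|) =
      gaussianPDFReal 0 1 |x| * exp (-t * |x|) := fun x ↦ by
    simp [gaussianPDFReal, sq_abs]
  have htilt : ∀ y, gaussianPDFReal 0 1 y * exp (-t * y) =
      exp (t ^ 2 / 2) * gaussianPDFReal 0 1 (-(y + t)) := fun y ↦ by
    rw [gaussianPDFReal_mul_exp, gaussianPDFReal_neg, gaussianPDFReal_add]
    simp
  rw [integral_gaussianReal_eq_integral_smul one_ne_zero]
  simp_rw [heven]
  rw [integral_comp_abs (f := fun y ↦ gaussianPDFReal 0 1 y * exp (-t * y))]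
  simp_rw [htilt]
  rw [integral_const_mul, setIntegral_Ioi_comp_add_right (fun y ↦ gaussianPDFReal 0 1 (-y)),
    zero_add, integral_comp_neg_Ioi, stdNormalCDF_eq_setIntegral_gaussianPDFReal]
  ring

lemma integral_exp_neg_mul_abs_gaussianReal (t : ℝ) (v : ℝ≥0) :
    ∫ x, exp (-t * |x|) ∂gaussianReal 0 v =
      2 * exp (v * t ^ 2 / 2) * stdNormalCDF (-(√v * t)) := by
  have hlaw : (gaussianReal 0 1).map (√v * ·) = gaussianReal 0 v := by
    rw [gaussianReal_map_const_mul, mul_zero, mul_one]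
    congr 1
    exact NNReal.eq (by simp)
  have hscale : ∀ x, exp (-t * |√v * x|) = exp (-(√v * t) * |x|) := fun x ↦ by
    rw [abs_mul, abs_of_nonneg (sqrt_nonneg _)]
    ring_nf
  rw [← hlaw, integral_map (by fun_prop) (by fun_prop)]
  simp_rw [hscale]
  rw [integral_exp_neg_mul_abs_gaussianReal_zero_one, mul_pow, sq_sqrt v.coe_nonneg]

lemma min_eq_add_sub_abs_sub_div_two {α : Type*} [Field α] [LinearOrder α] [IsStrictOrderedRing α]
    (x y : α) : min x y = (x + y - |x - y|) / 2 := by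
  linarith [min_add_max x y, max_sub_min_eq_abs' x y]

namespace ProbabilityTheory

variable {Ω : Type*} {mΩ : MeasurableSpace Ω} {P : Measure Ω} {X Y : Ω → ℝ} {m₁ m₂ : ℝ}

lemma gaussianReal_sub_gaussianReal_of_indepFun {v₁ v₂ : ℝ≥0} (hXY : X ⟂ᵢ[P] Y)
    (hX : P.map X = gaussianReal m₁ v₁) (hY : P.map Y = gaussianReal m₂ v₂) :
    P.map (X - Y) = gaussianReal (m₁ - m₂) (v₁ + v₂) := by
  have hY_meas : AEMeasurable Y P := aemeasurable_of_map_neZero (by rw [hY]; infer_instance)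
  have hnegY : P.map (-Y) = gaussianReal (-m₂) v₂ := by
    rw [← gaussianReal_map_neg, ← hY, AEMeasurable.map_map_of_aemeasurable (by fun_prop) hY_meas]
    rfl
  rw [sub_eq_add_neg, sub_eq_add_neg]
  exact gaussianReal_add_gaussianReal_of_indepFun (hXY.comp measurable_id measurable_neg) hX hnegY

lemma indepFun_add_sub_of_gaussianReal {v : ℝ≥0} (hXY : X ⟂ᵢ[P] Y)
    (hX : P.map X = gaussianReal m₁ v) (hY : P.map Y = gaussianReal m₂ v) :
    (X + Y) ⟂ᵢ[P] (X - Y) := by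
  have hXlaw : HasLaw X (gaussianReal m₁ v) P :=
    ⟨aemeasurable_of_map_neZero (by rw [hX]; infer_instance), hX⟩
  have hYlaw : HasLaw Y (gaussianReal m₂ v) P :=
    ⟨aemeasurable_of_map_neZero (by rw [hY]; infer_instance), hY⟩
  let L : ℝ × ℝ →L[ℝ] ℝ × ℝ :=
    (ContinuousLinearMap.fst ℝ ℝ ℝ + ContinuousLinearMap.snd ℝ ℝ ℝ).prod
      (ContinuousLinearMap.fst ℝ ℝ ℝ - ContinuousLinearMap.snd ℝ ℝ ℝ)
  have hsum_diff : HasGaussianLaw (fun ω ↦ ((X + Y) ω, (X - Y) ω)) P :=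
    (hXY.hasGaussianLaw hXlaw.hasGaussianLaw hYlaw.hasGaussianLaw).map_fun L
  refine hsum_diff.indepFun_of_covariance_eq_zero ?_
  have := hXlaw.hasGaussianLaw.isProbabilityMeasure
  have hX2 := hXlaw.hasGaussianLaw.memLp_two
  have hY2 := hYlaw.hasGaussianLaw.memLp_two
  rw [covariance_add_left hX2 hY2 (hX2.sub hY2), covariance_sub_right hX2 hX2 hY2,
    covariance_sub_right hY2 hX2 hY2, covariance_self hXlaw.aemeasurable,
    covariance_self hYlaw.aemeasurable, covariance_comm, hXlaw.variance_eq,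
    hYlaw.variance_eq, variance_id_gaussianReal, variance_id_gaussianReal]
  ring

lemma mgf_min_of_indepFun_gaussianReal (hXY : X ⟂ᵢ[P] Y)
    (hX : P.map X = gaussianReal 0 1) (hY : P.map Y = gaussianReal 0 1) (c : ℝ) :
    mgf (fun ω ↦ min (X ω) (Y ω)) P c = 2 * exp (c ^ 2 / 2) * stdNormalCDF (-c / √2) := by
  have hsum : P.map (X + Y) = gaussianReal 0 2 := by
    simpa [one_add_one_eq_two] using gaussianReal_add_gaussianReal_of_indepFun hXY hX hY
  have hdiff : P.map (X - Y) = gaussianReal 0 2 := by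
    simpa [one_add_one_eq_two] using gaussianReal_sub_gaussianReal_of_indepFun hXY hX hY
  have hsum_meas : AEMeasurable (X + Y) P :=
    aemeasurable_of_map_neZero (by rw [hsum]; infer_instance)
  have hdiff_meas : AEMeasurable (X - Y) P :=
    aemeasurable_of_map_neZero (by rw [hdiff]; infer_instance)
  have hsplit : ∀ ω, exp (c * min (X ω) (Y ω)) =
      exp (c / 2 * (X + Y) ω) * exp (-(c / 2) * |(X - Y) ω|) := fun ω ↦ by
    simp only [Pi.add_apply, Pi.sub_apply]
    rw [min_eq_add_sub_abs_sub_div_two, ← exp_add]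
    ring_nf
  have hmgf : mgf (X + Y) P (c / 2) = exp (c ^ 2 / 4) := by
    rw [mgf_gaussianReal hsum]
    congr 1
    push_cast
    ring
  have habs : ∫ ω, exp (-(c / 2) * |(X - Y) ω|) ∂P =
      2 * exp (c ^ 2 / 4) * stdNormalCDF (-c / √2) := by
    rw [← integral_map hdiff_meas (by fun_prop) (f := fun d ↦ exp (-(c / 2) * |d|)), hdiff,
      integral_exp_neg_mul_abs_gaussianReal, NNReal.coe_ofNat, neg_div]
    have hscale : √2 * (c / 2) = c / √2 := by
      rw [eq_div_iff (by positivity), mul_right_comm, mul_self_sqrt zero_le_two]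
      ring
    rw [hscale]
    ring_nf
  rw [mgf]
  simp_rw [hsplit]
  rw [(indepFun_add_sub_of_gaussianReal hXY hX hY).integral_fun_comp_mul_comp hsum_meas
      hdiff_meas (f := fun s ↦ exp (c / 2 * s)) (g := fun d ↦ exp (-(c / 2) * |d|))
      (by fun_prop) (by fun_prop), ← mgf, hmgf, habs,
    show c ^ 2 / 2 = c ^ 2 / 4 + c ^ 2 / 4 by ring, exp_add]
  ring

end ProbabilityTheory

theorem min_logNormal_moment_general {Ω : Type*} [MeasureSpace Ω]
    (Z₁ Z₂ : Ω → ℝ) (μ σ : ℝ) (hσ : 0 < σ)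
    (hZ₁ : Measure.map Z₁ ℙ = gaussianReal 0 1)
    (hZ₂ : Measure.map Z₂ ℙ = gaussianReal 0 1)
    (hindep : IndepFun Z₁ Z₂ ℙ)
    (X Y : Ω → ℝ)
    (hX : X = fun ω => Real.exp (μ + σ * Z₁ ω))
    (hY : Y = fun ω => Real.exp (μ + σ * Z₂ ω))
    (a : ℝ) :
    ∫ ω, (min (X ω) (Y ω)) ^ a ∂ℙ =
      2 * Real.exp (a * μ + (a * σ) ^ 2 / 2) * stdNormalCDF (-(a * σ) / Real.sqrt 2) := by
  have hpoint : ∀ ω, min (X ω) (Y ω) ^ a = exp (a * μ) * exp (a * σ * min (Z₁ ω) (Z₂ ω)) :=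
    fun ω ↦ by
      rw [hX, hY, ← exp_monotone.map_min, min_add_add_left, ← mul_min_of_nonneg _ _ hσ.le,
        ← exp_mul, ← exp_add]
      ring_nf
  simp_rw [hpoint]
  rw [integral_const_mul, ← mgf, mgf_min_of_indepFun_gaussianReal hindep hZ₁ hZ₂, exp_add]
  ring

/-- If `X = e^(μ + σZ₁)` and `Y = e^(μ + σZ₂)` with `Z₁, Z₂` i.i.d. standard normal, then
for every `a > 0`, `E[(min{X,Y})^a] = 2 e^(aμ + (aσ)²/2) Φ(−aσ/√2)`. -/
theorem min_logNormal_moment {Ω : Type*} [MeasureSpace Ω]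
    [IsProbabilityMeasure (ℙ : Measure Ω)]
    (Z₁ Z₂ : Ω → ℝ) (μ σ : ℝ) (hσ : 0 < σ)
    (hZ₁ : Measure.map Z₁ ℙ = gaussianReal 0 1)
    (hZ₂ : Measure.map Z₂ ℙ = gaussianReal 0 1)
    (hindep : IndepFun Z₁ Z₂ ℙ)
    (X Y : Ω → ℝ)
    (hX : X = fun ω => Real.exp (μ + σ * Z₁ ω))
    (hY : Y = fun ω => Real.exp (μ + σ * Z₂ ω))
    (a : ℝ) (ha : 0 < a) :
    ∫ ω, (min (X ω) (Y ω)) ^ a ∂ℙ =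
      2 * Real.exp (a * μ + (a * σ) ^ 2 / 2) * stdNormalCDF (-(a * σ) / Real.sqrt 2) :=
  min_logNormal_moment_general Z₁ Z₂ μ σ hσ hZ₁ hZ₂ hindep X Y hX hY a
end

section
/- Let Z₁, Z₂ be i.i.d. standard normal random variables and a, σ > 0. Then E[e^(aσ min{Z₁,Z₂})] = 2 e^((aσ)²/2) Φ(−aσ/√2). -/
open MeasureTheory ProbabilityTheory Real

/-!
For i.i.d. atomless `X, Y`, splitting according to which coordinate is smaller and using the
symmetry of the joint law gives `E[h(min(X, Y))] = 2 E[h(X) P(Y ≥ X)]`. With `h = exp (c ·)` and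
`P(Y ≥ x) = Φ(-x)`, tilting the standard normal law by `e^{cx}` turns it into `N(c, 1)` at the cost
of the factor `e^{c²/2}`, and `E[Φ(-X')] = P(X' + Y ≤ 0)` for `X' ~ N(c, 1)` independent of `Y`;
since `X' + Y ~ N(c, 2)` this is `Φ(-c/√2)`.
-/

open Set
open scoped NNReal

lemma stdNormalCDF_eq_measureReal (z : ℝ) :
    stdNormalCDF z = (gaussianReal 0 1).real (Iic z) := by
  rw [measureReal_def, gaussianReal_apply_eq_integral 0 one_ne_zero,
    ENNReal.toReal_ofReal (setIntegral_nonneg measurableSet_Iic fun _ _ ↦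
      gaussianPDFReal_nonneg _ _ _)]
  simp [stdNormalCDF, gaussianPDFReal, div_eq_inv_mul]

lemma stdNormalCDF_neg (x : ℝ) : stdNormalCDF (-x) = (gaussianReal 0 1).real (Ici x) := by
  conv_rhs => rw [← neg_zero, ← gaussianReal_map_neg, map_measureReal_apply measurable_neg
    measurableSet_Ici]
  simp [stdNormalCDF_eq_measureReal]

lemma gaussianReal_real_Iic (m : ℝ) {v : ℝ≥0} (hv : v ≠ 0) (t : ℝ) :
    (gaussianReal m v).real (Iic t) = stdNormalCDF ((t - m) / √v) := by
  have hstd : (gaussianReal m v).map (fun x ↦ (x - m) / √v) = gaussianReal 0 1 := by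
    have hcomp : (fun x ↦ (x - m) / √v) = (· / √v) ∘ (· - m) := rfl
    rw [hcomp, ← Measure.map_map (by fun_prop) (by fun_prop), gaussianReal_map_sub_const,
      gaussianReal_map_div_const, sub_self, zero_div]
    congr 1
    ext
    simp [hv]
  rw [stdNormalCDF_eq_measureReal, ← hstd, map_measureReal_apply (by fun_prop) measurableSet_Iic]
  congr 1
  ext x
  simp [div_le_div_iff_of_pos_right (by positivity : 0 < √(v : ℝ))]

lemma exp_mul_mul_gaussianPDFReal (μ : ℝ) (v : ℝ≥0) (t x : ℝ) :
    exp (t * x) * gaussianPDFReal μ v x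
      = exp (μ * t + v * t ^ 2 / 2) * gaussianPDFReal (μ + v * t) v x := by
  rcases eq_or_ne v 0 with rfl | hv
  · simp
  simp only [gaussianPDFReal]
  rw [mul_left_comm, ← exp_add, mul_left_comm, ← exp_add]
  congr 2
  field_simp
  ring

lemma integral_exp_mul_mul_gaussianReal (μ : ℝ) (v : ℝ≥0) (t : ℝ) (g : ℝ → ℝ) :
    ∫ x, exp (t * x) * g x ∂gaussianReal μ v
      = exp (μ * t + v * t ^ 2 / 2) * ∫ x, g x ∂gaussianReal (μ + v * t) v := by
  rcases eq_or_ne v 0 with rfl | hv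
  · simp [gaussianReal_zero_var, mul_comm]
  simp_rw [integral_gaussianReal_eq_integral_smul hv, smul_eq_mul, ← integral_const_mul]
  congr 1 with x
  rw [← mul_assoc, mul_comm _ (exp _), exp_mul_mul_gaussianPDFReal, mul_assoc]

lemma integral_indicator_comp_fst_prod {α β : Type*} [MeasurableSpace α] [MeasurableSpace β]
    {μ : Measure α} {ν : Measure β} [SFinite μ] [IsFiniteMeasure ν] {f : α → ℝ}
    (hf : Integrable f μ) {S : Set (α × β)} (hS : MeasurableSet S) :
    ∫ p, S.indicator (fun p ↦ f p.1) p ∂μ.prod ν = ∫ x, ν.real (Prod.mk x ⁻¹' S) * f x ∂μ := by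
  rw [integral_prod _ ((hf.comp_fst ν).indicator hS)]
  congr 1 with x
  rw [← smul_eq_mul, ← integral_indicator_const _ (measurable_prodMk_left hS)]
  rfl

lemma integral_stdNormalCDF_sub_gaussianReal (m : ℝ) (v : ℝ≥0) (t : ℝ) :
    ∫ x, stdNormalCDF (t - x) ∂gaussianReal m v = stdNormalCDF ((t - m) / √(v + 1 : ℝ≥0)) := by
  set S : Set (ℝ × ℝ) := {p | p.1 + p.2 ≤ t}
  have hS : MeasurableSet S := measurableSet_le (by fun_prop) (by fun_prop)
  have hslice (x : ℝ) : stdNormalCDF (t - x) = (gaussianReal 0 1).real (Prod.mk x ⁻¹' S) * 1 := by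
    rw [mul_one, stdNormalCDF_eq_measureReal]
    congr 1 with y
    simp [S, le_sub_iff_add_le']
  calc ∫ x, stdNormalCDF (t - x) ∂gaussianReal m v
      = ((gaussianReal m v).prod (gaussianReal 0 1)).real S := by
        simp_rw [hslice, ← integral_indicator_comp_fst_prod (integrable_const 1) hS]
        exact integral_indicator_one hS
    _ = (gaussianReal m v ∗ gaussianReal 0 1).real (Iic t) := by
        rw [Measure.conv, map_measureReal_apply (by fun_prop) measurableSet_Iic]
        rfl
    _ = stdNormalCDF ((t - m) / √(v + 1 : ℝ≥0)) := by
        rw [gaussianReal_conv_gaussianReal, add_zero,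
          gaussianReal_real_Iic m (by positivity)]

lemma integral_comp_min_prod_self {μ : Measure ℝ} [IsFiniteMeasure μ] [NullSingletonClass μ]
    {h : ℝ → ℝ} (hh : Integrable h μ) :
    ∫ p, h (min p.1 p.2) ∂μ.prod μ = 2 * ∫ x, μ.real (Ici x) * h x ∂μ := by
  set S : Set (ℝ × ℝ) := {p | p.1 ≤ p.2}
  set T : Set (ℝ × ℝ) := {p | p.1 < p.2}
  have hS : MeasurableSet S := measurableSet_le (by fun_prop) (by fun_prop)
  have hT : MeasurableSet T := measurableSet_lt (by fun_prop) (by fun_prop)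
  have hsplit (p : ℝ × ℝ) : h (min p.1 p.2)
      = S.indicator (fun q ↦ h q.1) p + T.indicator (fun q ↦ h q.1) p.swap := by
    rcases le_or_gt p.1 p.2 with hp | hp
    · simp [S, T, hp, hp.not_gt]
    · simp [S, T, hp, hp.not_ge, hp.le]
  have hint (U : Set (ℝ × ℝ)) (hU : MeasurableSet U) :
      Integrable (U.indicator fun q ↦ h q.1) (μ.prod μ) :=
    (hh.comp_fst μ).indicator hU
  have hint_swap : Integrable (fun p ↦ T.indicator (fun q ↦ h q.1) p.swap) (μ.prod μ) :=
    (hint T hT).swap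
  simp_rw [hsplit]
  rw [integral_add (hint S hS) hint_swap, integral_prod_swap (T.indicator fun q ↦ h q.1),
    integral_indicator_comp_fst_prod hh hS, integral_indicator_comp_fst_prod hh hT]
  have hIci (x : ℝ) : Prod.mk x ⁻¹' S = Ici x := rfl
  have hIoi (x : ℝ) : μ.real (Prod.mk x ⁻¹' T) = μ.real (Ici x) :=
    measureReal_congr Ioi_ae_eq_Ici
  simp_rw [hIci, hIoi, ← two_mul]

theorem exp_min_gaussian_general {Ω : Type*} [MeasureSpace Ω]
    [IsProbabilityMeasure (ℙ : Measure Ω)]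
    (Z₁ Z₂ : Ω → ℝ) (a σ : ℝ)
    (hZ₁ : Measure.map Z₁ ℙ = gaussianReal 0 1)
    (hZ₂ : Measure.map Z₂ ℙ = gaussianReal 0 1)
    (hindep : IndepFun Z₁ Z₂ ℙ) :
    ∫ ω, Real.exp (a * σ * min (Z₁ ω) (Z₂ ω)) ∂ℙ =
      2 * Real.exp ((a * σ) ^ 2 / 2) * stdNormalCDF (-(a * σ) / Real.sqrt 2) := by
  set c := a * σ
  have hZ₁m : AEMeasurable Z₁ := aemeasurable_of_map_neZero (by rw [hZ₁]; infer_instance)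
  have hZ₂m : AEMeasurable Z₂ := aemeasurable_of_map_neZero (by rw [hZ₂]; infer_instance)
  have hlaw : Measure.map (fun ω ↦ (Z₁ ω, Z₂ ω)) ℙ = (gaussianReal 0 1).prod (gaussianReal 0 1) := by
    rw [hindep.map_prod_eq_prod_map_map hZ₁m hZ₂m, hZ₁, hZ₂]
  have := nullSingletonClass_gaussianReal (μ := 0) one_ne_zero
  calc ∫ ω, exp (c * min (Z₁ ω) (Z₂ ω)) ∂ℙ
      = ∫ p, exp (c * min p.1 p.2) ∂(gaussianReal 0 1).prod (gaussianReal 0 1) := by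
        rw [← hlaw, integral_map (hZ₁m.prodMk hZ₂m) (by fun_prop)]
    _ = 2 * ∫ x, exp (c * x) * stdNormalCDF (0 - x) ∂gaussianReal 0 1 := by
        rw [integral_comp_min_prod_self (integrable_exp_mul_gaussianReal c)]
        simp_rw [zero_sub, stdNormalCDF_neg, mul_comm]
    _ = 2 * exp (c ^ 2 / 2) * stdNormalCDF (-c / √2) := by
        rw [integral_exp_mul_mul_gaussianReal, integral_stdNormalCDF_sub_gaussianReal]
        norm_num [mul_assoc]

/-- If `Z₁, Z₂` are i.i.d. standard normal and `a, σ > 0`, then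
`E[e^(aσ min{Z₁,Z₂})] = 2 e^((aσ)²/2) Φ(−aσ/√2)`. -/
theorem exp_min_gaussian {Ω : Type*} [MeasureSpace Ω]
    [IsProbabilityMeasure (ℙ : Measure Ω)]
    (Z₁ Z₂ : Ω → ℝ) (a σ : ℝ) (ha : 0 < a) (hσ : 0 < σ)
    (hZ₁ : Measure.map Z₁ ℙ = gaussianReal 0 1)
    (hZ₂ : Measure.map Z₂ ℙ = gaussianReal 0 1)
    (hindep : IndepFun Z₁ Z₂ ℙ) :
    ∫ ω, Real.exp (a * σ * min (Z₁ ω) (Z₂ ω)) ∂ℙ =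
      2 * Real.exp ((a * σ) ^ 2 / 2) * stdNormalCDF (-(a * σ) / Real.sqrt 2) :=
  exp_min_gaussian_general Z₁ Z₂ a σ hZ₁ hZ₂ hindep
end

section
/- If X, Y are i.i.d. Gamma(b^(−1)x + 1, b) random variables with x, b > 0, then E[min{X,Y} − x] = b(x/b + 1) − (b/√π) · Γ(x/b + 3/2)/Γ(x/b + 1) − x, and as b → 0⁺ this quantity equals −√(bx/π) + b + O_x(b^(3/2)). -/
/-
By the layer-cake formula, `E[min(X, Y)] = ∫₀^∞ S(u)² du` with `S` the survival function of
Gamma(a, r), and integration by parts turns this into `2 ∫₀^∞ u f(u) S(u) du`, `f` the density.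
Substituting `t = u w` in `S(u)` and swapping the integrals leaves a Gamma integral in `u` and
`∫₁^∞ w^(a-1) (1+w)^(-(2a+1)) dw`, which `v = w / (1 + w)` turns into `∫_{1/2}^1 v^(a-1) (1-v)^a dv`,
a quarter of `B(a, a)` minus a boundary term. Legendre's duplication formula then yields
`E[min(X, Y)] = a/r - Γ(a+1/2) / (√π Γ(a) r)`.

For the asymptotics, log-convexity of `Γ` gives `α - 1/2 ≤ (Γ(α+1/2)/Γ(α))² ≤ α`, so that with
`α = x/b + 1` the quantity `b Γ(x/b+3/2)/Γ(x/b+1)` lies between `√(bx)` and `√(bx + b²)`.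
-/

open MeasureTheory ProbabilityTheory Real
open Set Filter Topology

theorem intervalIntegral_rpow_mul_one_sub_rpow {a b : ℝ} (ha : 0 < a) (hb : 0 < b) :
    ∫ v in (0:ℝ)..1, v ^ (a - 1) * (1 - v) ^ (b - 1) = Gamma a * Gamma b / Gamma (a + b) := by
  have hbeta : Complex.betaIntegral a b
      = ((∫ v in (0:ℝ)..1, v ^ (a - 1) * (1 - v) ^ (b - 1) : ℝ) : ℂ) := by
    rw [Complex.betaIntegral, ← intervalIntegral.integral_ofReal]
    refine intervalIntegral.integral_congr_ae (ae_of_all _ fun v hv => ?_)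
    rw [uIoc_of_le zero_le_one] at hv
    push_cast
    rw [Complex.ofReal_cpow hv.1.le, Complex.ofReal_cpow (by linarith [hv.2] : (0:ℝ) ≤ 1 - v)]
    push_cast; ring_nf
  have h := Complex.Gamma_mul_Gamma_eq_betaIntegral (s := a) (t := b) (by simpa) (by simpa)
  rw [hbeta, ← Complex.ofReal_add, Complex.Gamma_ofReal, Complex.Gamma_ofReal,
    Complex.Gamma_ofReal] at h
  rw [eq_div_iff (Gamma_pos_of_pos (add_pos ha hb)).ne']
  exact_mod_cast (h.trans (mul_comm _ _)).symm

theorem integral_Ioi_one_rpow_mul_one_add_rpow (a b : ℝ) :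
    ∫ w in Ioi (1:ℝ), w ^ (a - 1) * (1 + w) ^ (-(a + b))
      = ∫ v in Ioo (1/2:ℝ) 1, v ^ (a - 1) * (1 - v) ^ (b - 1) := by
  have himage : (fun v : ℝ => v / (1 - v)) '' Ioo (1/2) 1 = Ioi 1 := by
    ext w
    constructor
    · rintro ⟨v, ⟨hv₁, hv₂⟩, rfl⟩
      rw [mem_Ioi, lt_div_iff₀ (by linarith)]
      linarith
    · intro (hw : 1 < w)
      refine ⟨w / (1 + w), ⟨?_, ?_⟩, ?_⟩
      · rw [lt_div_iff₀ (by linarith)]; linarith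
      · rw [div_lt_one (by linarith)]; linarith
      · field_simp; ring
  have hderiv : ∀ v ∈ Ioo (1/2:ℝ) 1,
      HasDerivWithinAt (fun v : ℝ => v / (1 - v)) ((1 - v) ^ 2)⁻¹ (Ioo (1/2) 1) v := by
    intro v hv
    have h := (hasDerivAt_id v).div ((hasDerivAt_const v 1).sub (hasDerivAt_id v))
      (by linarith [hv.2] : (1:ℝ) - v ≠ 0)
    exact h.hasDerivWithinAt.congr_deriv (by
      simp only [Pi.sub_apply, id_eq]; field_simp; ring)
  have hinj : InjOn (fun v : ℝ => v / (1 - v)) (Ioo (1/2) 1) := by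
    intro u hu v hv h
    have hu' : (1:ℝ) - u ≠ 0 := by linarith [hu.2]
    have hv' : (1:ℝ) - v ≠ 0 := by linarith [hv.2]
    field_simp at h
    linarith
  rw [← himage, integral_image_eq_integral_abs_deriv_smul measurableSet_Ioo hderiv hinj]
  refine setIntegral_congr_fun measurableSet_Ioo fun v ⟨hv₁, hv₂⟩ => ?_
  have hv : 0 < v := by linarith
  have hv' : 0 < 1 - v := by linarith
  have hsum : 1 + v / (1 - v) = (1 - v)⁻¹ := by field_simp; ring
  have hpow : ((1 - v) ^ 2)⁻¹ * ((1 - v) ^ (a - 1))⁻¹ * (1 - v) ^ (a + b) = (1 - v) ^ (b - 1) := by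
    rw [← rpow_natCast, ← rpow_neg hv'.le, ← rpow_neg hv'.le, ← rpow_add hv', ← rpow_add hv']
    push_cast; ring_nf
  rw [smul_eq_mul, hsum, abs_of_pos (by positivity), div_rpow hv.le hv'.le, inv_rpow hv'.le,
    ← rpow_neg hv'.le, neg_neg, ← hpow]
  ring

theorem continuous_rpow_mul_one_sub_rpow {p q : ℝ} (hp : 0 ≤ p) (hq : 0 ≤ q) :
    Continuous fun v : ℝ => v ^ p * (1 - v) ^ q :=
  (continuous_id.rpow_const fun _ => Or.inr hp).mul
    ((continuous_const.sub continuous_id).rpow_const fun _ => Or.inr hq)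

theorem intervalIntegral_half_one_rpow_mul_one_sub_rpow_sub_one {a : ℝ} (ha : 1 ≤ a) :
    ∫ v in (1/2:ℝ)..1, v ^ (a - 1) * (1 - v) ^ (a - 1) = Gamma a ^ 2 / Gamma (2 * a) / 2 := by
  have hK := continuous_rpow_mul_one_sub_rpow (p := a - 1) (q := a - 1) (by linarith) (by linarith)
  have hbeta := intervalIntegral_rpow_mul_one_sub_rpow (by linarith : 0 < a) (by linarith : 0 < a)
  rw [← intervalIntegral.integral_add_adjacent_intervals (b := 1/2)
    (hK.intervalIntegrable _ _) (hK.intervalIntegrable _ _), ← two_mul, ← sq] at hbeta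
  -- the integrand is symmetric under `v ↦ 1 - v`
  have hsymm := intervalIntegral.integral_comp_sub_left
    (fun v : ℝ => v ^ (a - 1) * (1 - v) ^ (a - 1)) (a := 1/2) (b := 1) 1
  norm_num at hsymm
  rw [intervalIntegral.integral_congr fun v _ => mul_comm _ _] at hsymm
  linarith

theorem intervalIntegral_half_one_deriv_rpow_mul_one_sub_rpow {a : ℝ} (ha : 1 ≤ a) :
    ∫ v in (1/2:ℝ)..1, (a * (v ^ (a - 1) * (1 - v) ^ a) - a * (v ^ a * (1 - v) ^ (a - 1)))
      = -(2 ^ (1 - 2 * a) / 2) := by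
  have hderiv : ∀ v ∈ uIcc (1/2:ℝ) 1, HasDerivAt (fun v : ℝ => v ^ a * (1 - v) ^ a)
      (a * (v ^ (a - 1) * (1 - v) ^ a) - a * (v ^ a * (1 - v) ^ (a - 1))) v := by
    intro v _
    have h₁ := hasDerivAt_rpow_const (x := v) (Or.inr ha)
    have h₂ := (hasDerivAt_rpow_const (x := 1 - v) (Or.inr ha)).comp v
      ((hasDerivAt_const v (1:ℝ)).sub (hasDerivAt_id v))
    exact (h₁.mul h₂).congr_deriv (by simp only [Function.comp_apply]; ring)
  rw [intervalIntegral.integral_eq_sub_of_hasDerivAt hderiv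
    (((continuous_const.mul (continuous_rpow_mul_one_sub_rpow (by linarith) (by linarith))).sub
      (continuous_const.mul (continuous_rpow_mul_one_sub_rpow (by linarith) (by linarith))))
        |>.intervalIntegrable _ _),
    one_rpow, sub_self, zero_rpow (by linarith), ← mul_rpow (by norm_num) (by norm_num),
    rpow_sub two_pos, rpow_one, rpow_mul zero_le_two]
  norm_num
  rw [one_div, inv_rpow (by norm_num)]
  ring

theorem integral_Ioo_half_one_rpow_mul_one_sub_rpow {a : ℝ} (ha : 1 ≤ a) :
    ∫ v in Ioo (1/2:ℝ) 1, v ^ (a - 1) * (1 - v) ^ a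
      = (Gamma a ^ 2 / Gamma (2 * a) - 2 ^ (1 - 2 * a) / a) / 4 := by
  have ha₀ : 0 < a := by linarith
  have hI := (continuous_rpow_mul_one_sub_rpow (p := a - 1) (q := a) (by linarith)
    ha₀.le).intervalIntegrable (μ := volume) (1/2) 1
  have hJ := (continuous_rpow_mul_one_sub_rpow (p := a) (q := a - 1) ha₀.le
    (by linarith)).intervalIntegrable (μ := volume) (1/2) 1
  have hsum := intervalIntegral_half_one_rpow_mul_one_sub_rpow_sub_one ha
  have hdiff := intervalIntegral_half_one_deriv_rpow_mul_one_sub_rpow ha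
  have hpt : ∀ v ∈ uIcc (1/2:ℝ) 1, v ^ (a - 1) * (1 - v) ^ a + v ^ a * (1 - v) ^ (a - 1)
      = v ^ (a - 1) * (1 - v) ^ (a - 1) := by
    intro v hv
    rw [uIcc_of_le (by norm_num)] at hv
    have hpow : ∀ {w : ℝ}, 0 ≤ w → w ^ a = w ^ (a - 1) * w := fun hw => by
      rw [← rpow_add_one' hw (by linarith)]; ring_nf
    rw [hpow (by linarith [hv.2]), hpow (by linarith [hv.1])]
    ring
  rw [← intervalIntegral.integral_congr hpt, intervalIntegral.integral_add hI hJ] at hsum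
  rw [intervalIntegral.integral_sub (hI.const_mul a) (hJ.const_mul a),
    intervalIntegral.integral_const_mul, intervalIntegral.integral_const_mul] at hdiff
  rw [← integral_Ioc_eq_integral_Ioo, ← intervalIntegral.integral_of_le (by norm_num)]
  generalize ∫ v in (1/2:ℝ)..1, v ^ (a - 1) * (1 - v) ^ a = I at hsum hdiff ⊢
  generalize ∫ v in (1/2:ℝ)..1, v ^ a * (1 - v) ^ (a - 1) = J at hsum hdiff ⊢
  generalize (2:ℝ) ^ (1 - 2 * a) = P at hdiff ⊢
  have hIJ : I - J = -(P / a) / 2 := by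
    field_simp
    linear_combination 2 * hdiff
  linear_combination hsum / 2 + hIJ / 2

section Tail

variable {f : ℝ → ℝ}

theorem hasDerivAt_integral_Ioi (hfc : Continuous f) (hfi : Integrable f) (u : ℝ) :
    HasDerivAt (fun v => ∫ t in Ioi v, f t) (-f u) u := by
  have h : (fun v => ∫ t in Ioi v, f t)
      = fun v => (∫ t in Ioi 0, f t) - ∫ t in (0:ℝ)..v, f t := by
    funext v
    rw [← intervalIntegral.integral_Ioi_sub_Ioi' hfi.integrableOn hfi.integrableOn, sub_sub_cancel]
  rw [h]
  exact (hfc.integral_hasStrictDerivAt 0 u).hasDerivAt.const_sub _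

theorem continuous_integral_Ioi (hfc : Continuous f) (hfi : Integrable f) :
    Continuous fun v => ∫ t in Ioi v, f t :=
  continuous_iff_continuousAt.2 fun u => (hasDerivAt_integral_Ioi hfc hfi u).continuousAt

theorem mul_integral_Ioi_le (hf0 : ∀ t, 0 ≤ f t) (hfi : Integrable f)
    (hm : IntegrableOn (fun t => t * f t) (Ioi 0)) {u : ℝ} (hu : 0 < u) :
    u * ∫ t in Ioi u, f t ≤ ∫ t in Ioi 0, t * f t :=
  calc u * ∫ t in Ioi u, f t = ∫ t in Ioi u, u * f t := (integral_const_mul u _).symm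
    _ ≤ ∫ t in Ioi u, t * f t :=
      setIntegral_mono_on (hfi.integrableOn.const_mul u) (hm.mono_set (Ioi_subset_Ioi hu.le))
        measurableSet_Ioi fun t ht => mul_le_mul_of_nonneg_right (le_of_lt ht) (hf0 t)
    _ ≤ ∫ t in Ioi 0, t * f t :=
      setIntegral_mono_set hm (ae_restrict_of_forall_mem measurableSet_Ioi
        fun t (ht : 0 < t) => mul_nonneg ht.le (hf0 t)) (Ioi_subset_Ioi hu.le).eventuallyLE

theorem tendsto_integral_Ioi_atTop (hf0 : ∀ t, 0 ≤ f t) (hfi : Integrable f)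
    (hm : IntegrableOn (fun t => t * f t) (Ioi 0)) :
    Tendsto (fun v => ∫ t in Ioi v, f t) atTop (𝓝 0) := by
  refine squeeze_zero' (g := fun v => (∫ t in Ioi 0, t * f t) / v)
    (.of_forall fun v => setIntegral_nonneg measurableSet_Ioi fun t _ => hf0 t) ?_
    (tendsto_const_nhds.div_atTop tendsto_id)
  filter_upwards [eventually_gt_atTop 0] with v hv
  rw [le_div_iff₀ hv, mul_comm]
  exact mul_integral_Ioi_le hf0 hfi hm hv

theorem integrableOn_sq_integral_Ioi (hfc : Continuous f) (hf0 : ∀ t, 0 ≤ f t)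
    (hfi : Integrable f) (hm : IntegrableOn (fun t => t * f t) (Ioi 0)) :
    IntegrableOn (fun u => (∫ t in Ioi u, f t) ^ 2) (Ioi 0) := by
  have hcont : Continuous fun u => (∫ t in Ioi u, f t) ^ 2 :=
    (continuous_integral_Ioi hfc hfi).pow 2
  set M := ∫ t in Ioi 0, t * f t
  rw [← Ioc_union_Ioi_eq_Ioi zero_le_one]
  refine (hcont.integrableOn_Icc.mono_set Ioc_subset_Icc_self).union ?_
  -- beyond `1`, Markov's inequality bounds the integrand by `M ^ 2 * u ^ (-2)`
  refine Integrable.mono' ((integrableOn_Ioi_rpow_of_lt (by norm_num : (-2:ℝ) < -1)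
    one_pos).const_mul (M ^ 2)) hcont.aestronglyMeasurable ?_
  refine ae_restrict_of_forall_mem measurableSet_Ioi fun u (hu : 1 < u) => ?_
  have hu₀ : 0 < u := by linarith
  have hS₀ : 0 ≤ ∫ t in Ioi u, f t := setIntegral_nonneg measurableSet_Ioi fun t _ => hf0 t
  have hS : ∫ t in Ioi u, f t ≤ M / u := by
    rw [le_div_iff₀ hu₀, mul_comm]
    exact mul_integral_Ioi_le hf0 hfi hm hu₀
  rw [norm_pow, norm_of_nonneg hS₀, rpow_neg hu₀.le, rpow_two, ← div_eq_mul_inv, ← div_pow]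
  exact pow_le_pow_left₀ hS₀ hS 2

theorem integrableOn_mul_integral_Ioi (hfc : Continuous f) (hf0 : ∀ t, 0 ≤ f t)
    (hfi : Integrable f) (hm : IntegrableOn (fun t => t * f t) (Ioi 0)) :
    IntegrableOn (fun u => u * f u * ∫ t in Ioi u, f t) (Ioi 0) := by
  refine (hm.mul_const (∫ t, f t)).mono'
    ((continuous_id.mul hfc).mul (continuous_integral_Ioi hfc hfi)).aestronglyMeasurable ?_
  refine ae_restrict_of_forall_mem measurableSet_Ioi fun u (hu : 0 < u) => ?_
  have hS₀ : 0 ≤ ∫ t in Ioi u, f t := setIntegral_nonneg measurableSet_Ioi fun t _ => hf0 t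
  rw [norm_of_nonneg (by have := hf0 u; positivity)]
  exact mul_le_mul_of_nonneg_left
    (setIntegral_le_integral hfi (.of_forall hf0)) (mul_nonneg hu.le (hf0 u))

theorem integral_sq_integral_Ioi (hfc : Continuous f) (hf0 : ∀ t, 0 ≤ f t)
    (hfi : Integrable f) (hm : IntegrableOn (fun t => t * f t) (Ioi 0)) :
    ∫ u in Ioi 0, (∫ t in Ioi u, f t) ^ 2 = 2 * ∫ u in Ioi 0, u * f u * ∫ t in Ioi u, f t := by
  have hS₀ : ∀ v, 0 ≤ ∫ t in Ioi v, f t := fun v =>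
    setIntegral_nonneg measurableSet_Ioi fun t _ => hf0 t
  have hderiv : ∀ u ∈ Ioi (0:ℝ), HasDerivAt (fun v => v * (∫ t in Ioi v, f t) ^ 2)
      ((∫ t in Ioi u, f t) ^ 2 - 2 * (u * f u * ∫ t in Ioi u, f t)) u :=
    fun u _ => ((hasDerivAt_id u).mul ((hasDerivAt_integral_Ioi hfc hfi u).pow 2)).congr_deriv
      (by simp only [id, Pi.pow_apply]; ring)
  have hcont : ContinuousWithinAt (fun v => v * (∫ t in Ioi v, f t) ^ 2) (Ici 0) 0 :=
    (continuous_id.mul ((continuous_integral_Ioi hfc hfi).pow 2)).continuousWithinAt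
  -- the boundary term vanishes because `v * ∫ t in Ioi v, f t` stays bounded by Markov
  have hlim : Tendsto (fun v => v * (∫ t in Ioi v, f t) ^ 2) atTop (𝓝 0) := by
    refine squeeze_zero' (g := fun v => (∫ t in Ioi 0, t * f t) * ∫ t in Ioi v, f t) ?_ ?_
      (by simpa using (tendsto_integral_Ioi_atTop hf0 hfi hm).const_mul (∫ t in Ioi 0, t * f t))
    · filter_upwards [eventually_gt_atTop 0] with v hv
      have := hS₀ v
      positivity
    · filter_upwards [eventually_gt_atTop 0] with v hv
      rw [sq, ← mul_assoc]
      exact mul_le_mul_of_nonneg_right (mul_integral_Ioi_le hf0 hfi hm hv) (hS₀ v)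
  have hsq := integrableOn_sq_integral_Ioi hfc hf0 hfi hm
  have hmul := (integrableOn_mul_integral_Ioi hfc hf0 hfi hm).const_mul 2
  have h := integral_Ioi_of_hasDerivAt_of_tendsto hcont hderiv (hsq.sub hmul) hlim
  rw [integral_sub hsq hmul, integral_const_mul] at h
  simp only [zero_mul, sub_zero] at h
  linarith

theorem integral_mul_integral_Ioi_eq_integral_integral (hfc : Continuous f) (hf0 : ∀ t, 0 ≤ f t)
    (hfi : Integrable f) (hm : IntegrableOn (fun t => t * f t) (Ioi 0)) :
    ∫ u in Ioi 0, u * f u * ∫ t in Ioi u, f t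
      = ∫ w in Ioi 1, ∫ u in Ioi 0, u ^ 2 * f u * f (u * w) := by
  have hscale : ∀ u ∈ Ioi (0:ℝ), u * f u * ∫ t in Ioi u, f t
      = ∫ w in Ioi 1, u ^ 2 * f u * f (u * w) := by
    intro u (hu : 0 < u)
    have h := integral_comp_mul_left_Ioi' f 1 hu
    rw [mul_one, smul_eq_mul] at h
    rw [← h, integral_const_mul]
    ring
  have hF : Integrable (Function.uncurry fun u w => u ^ 2 * f u * f (u * w))
      ((volume.restrict (Ioi 0)).prod (volume.restrict (Ioi 1))) := by
    have hFc : Continuous (Function.uncurry fun u w : ℝ => u ^ 2 * f u * f (u * w)) :=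
      ((continuous_fst.pow 2).mul (hfc.comp continuous_fst)).mul
        (hfc.comp (continuous_fst.mul continuous_snd))
    refine (integrable_prod_iff hFc.aestronglyMeasurable).2 ⟨?_, ?_⟩
    · refine ae_restrict_of_forall_mem measurableSet_Ioi fun u (hu : 0 < u) => ?_
      exact ((integrableOn_Ioi_comp_mul_left_iff f 1 hu).2 hfi.integrableOn).const_mul (u ^ 2 * f u)
    · refine (integrableOn_mul_integral_Ioi hfc hf0 hfi hm).congr_fun (fun u hu => ?_)
        measurableSet_Ioi
      dsimp only
      rw [hscale u hu]
      refine integral_congr_ae (.of_forall fun w => ?_)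
      simp only [Function.uncurry_apply_pair]
      rw [norm_of_nonneg (by have := hf0 u; have := hf0 (u * w); positivity)]
  rw [setIntegral_congr_fun measurableSet_Ioi hscale, integral_integral_swap hF]

end Tail

section MinProd

variable {μ ν : Measure ℝ} [SFinite ν]

theorem ae_nonneg_min_prod (hμ : μ (Iio 0) = 0) (hν : ν (Iio 0) = 0) :
    0 ≤ᵐ[μ.prod ν] fun p : ℝ × ℝ => min p.1 p.2 := by
  have hsub : {p : ℝ × ℝ | min p.1 p.2 < 0} ⊆ Iio 0 ×ˢ univ ∪ univ ×ˢ Iio 0 := fun p hp =>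
    (min_lt_iff.1 (show min p.1 p.2 < 0 from hp)).imp (fun h => ⟨h, trivial⟩)
      fun h => ⟨trivial, h⟩
  refine measure_mono_null hsub (measure_union_null ?_ ?_) |> measure_eq_zero_iff_ae_notMem.1
    |>.mono fun p hp => not_lt.1 hp
  · rw [Measure.prod_prod, hμ, zero_mul]
  · rw [Measure.prod_prod, hν, mul_zero]

theorem lintegral_ofReal_min_prod (hμ : μ (Iio 0) = 0) (hν : ν (Iio 0) = 0) :
    ∫⁻ p, ENNReal.ofReal (min p.1 p.2) ∂μ.prod ν = ∫⁻ t in Ioi 0, μ (Ioi t) * ν (Ioi t) := by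
  rw [lintegral_eq_lintegral_meas_lt _ (ae_nonneg_min_prod hμ hν)
    (continuous_fst.min continuous_snd).aemeasurable]
  refine setLIntegral_congr_fun measurableSet_Ioi fun t _ => ?_
  have hset : {p : ℝ × ℝ | t < min p.1 p.2} = Ioi t ×ˢ Ioi t := by
    ext p; simp
  rw [hset, Measure.prod_prod]

end MinProd

section GammaPDF

variable {a r : ℝ}

theorem continuous_gammaPDFReal (ha : 1 < a) : Continuous (gammaPDFReal a r) := by
  have h : gammaPDFReal a r = fun x => r ^ a / Gamma a * max x 0 ^ (a - 1) * exp (-(r * x)) := by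
    funext x
    rcases le_or_gt 0 x with hx | hx
    · rw [gammaPDFReal, if_pos hx, max_eq_left hx]
    · rw [gammaPDFReal, if_neg hx.not_ge, max_eq_right hx.le, zero_rpow (by linarith)]
      ring
  rw [h]
  exact (continuous_const.mul ((continuous_id.max continuous_const).rpow_const
    fun _ => Or.inr (by linarith))).mul (continuous_const.mul continuous_id).neg.rexp

theorem integrable_gammaPDFReal (ha : 0 < a) (hr : 0 < r) : Integrable (gammaPDFReal a r) :=
  ⟨(stronglyMeasurable_gammaPDFReal a r).aestronglyMeasurable, by
    rw [hasFiniteIntegral_iff_ofReal (.of_forall (gammaPDFReal_nonneg ha hr))]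
    exact (lintegral_gammaPDF_eq_one ha hr).trans_lt ENNReal.one_lt_top⟩

theorem integrableOn_mul_gammaPDFReal (ha : 0 < a) (hr : 0 < r) :
    IntegrableOn (fun t => t * gammaPDFReal a r t) (Ioi 0) := by
  refine IntegrableOn.congr_fun ((integrableOn_rpow_mul_exp_neg_mul_rpow (by linarith : -1 < a)
    one_pos hr).const_mul (r ^ a / Gamma a)) (fun t (ht : 0 < t) => ?_) measurableSet_Ioi
  rw [gammaPDFReal, if_pos ht.le, rpow_one, rpow_sub_one ht.ne']
  field_simp

theorem gammaMeasure_Iio_zero (a r : ℝ) : gammaMeasure a r (Iio 0) = 0 := by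
  rw [gammaMeasure, withDensity_apply _ measurableSet_Iio]
  exact lintegral_gammaPDF_of_nonpos le_rfl

theorem gammaMeasure_Ioi (ha : 0 < a) (hr : 0 < r) (t : ℝ) :
    gammaMeasure a r (Ioi t) = ENNReal.ofReal (∫ s in Ioi t, gammaPDFReal a r s) := by
  rw [gammaMeasure, withDensity_apply _ measurableSet_Ioi]
  exact (ofReal_integral_eq_lintegral_ofReal (integrable_gammaPDFReal ha hr).integrableOn
    (.of_forall (gammaPDFReal_nonneg ha hr))).symm

theorem integral_sq_mul_gammaPDFReal_mul_gammaPDFReal (ha : 0 < a) (hr : 0 < r) {w : ℝ}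
    (hw : 0 < w) :
    ∫ u in Ioi 0, u ^ 2 * gammaPDFReal a r u * gammaPDFReal a r (u * w)
      = Gamma (2 * a + 1) / (r * Gamma a ^ 2) * (w ^ (a - 1) * (1 + w) ^ (-(2 * a + 1))) := by
  have hrw : 0 < r * (1 + w) := by positivity
  have hpt : ∀ u ∈ Ioi (0:ℝ), u ^ 2 * gammaPDFReal a r u * gammaPDFReal a r (u * w)
      = (r ^ a / Gamma a) ^ 2 * w ^ (a - 1)
        * (u ^ ((2 * a + 1) - 1) * exp (-(r * (1 + w) * u))) := by
    intro u (hu : 0 < u)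
    rw [gammaPDFReal, gammaPDFReal, if_pos hu.le, if_pos (by positivity), mul_rpow hu.le hw.le,
      show (2 * a + 1) - 1 = 2 + ((a - 1) + (a - 1)) by ring, rpow_add hu, rpow_add hu,
      rpow_two, show -(r * (1 + w) * u) = -(r * u) + -(r * (u * w)) by ring, exp_add]
    ring
  have hr_pow : (r ^ a) ^ 2 * r ^ (-(2 * a + 1)) = r⁻¹ := by
    rw [← rpow_natCast, ← rpow_mul hr.le, ← rpow_add hr, ← rpow_neg_one]
    ring_nf
  rw [setIntegral_congr_fun measurableSet_Ioi hpt, integral_const_mul,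
    integral_rpow_mul_exp_neg_mul_Ioi (by linarith) hrw, one_div, inv_rpow hrw.le,
    ← rpow_neg hrw.le, mul_rpow hr.le (by linarith)]
  calc (r ^ a / Gamma a) ^ 2 * w ^ (a - 1)
        * (r ^ (-(2 * a + 1)) * (1 + w) ^ (-(2 * a + 1)) * Gamma (2 * a + 1))
      = (r ^ a) ^ 2 * r ^ (-(2 * a + 1)) * Gamma (2 * a + 1) / Gamma a ^ 2
        * (w ^ (a - 1) * (1 + w) ^ (-(2 * a + 1))) := by ring
    _ = _ := by rw [hr_pow]; field_simp

theorem integral_mul_gammaPDFReal_mul_integral_Ioi (ha : 1 < a) (hr : 0 < r) :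
    ∫ u in Ioi 0, u * gammaPDFReal a r u * ∫ t in Ioi u, gammaPDFReal a r t
      = Gamma (2 * a + 1) / (r * Gamma a ^ 2)
        * ∫ w in Ioi 1, w ^ (a - 1) * (1 + w) ^ (-(2 * a + 1)) := by
  have ha₀ : 0 < a := by linarith
  rw [integral_mul_integral_Ioi_eq_integral_integral (continuous_gammaPDFReal ha)
      (gammaPDFReal_nonneg ha₀ hr) (integrable_gammaPDFReal ha₀ hr)
      (integrableOn_mul_gammaPDFReal ha₀ hr),
    setIntegral_congr_fun measurableSet_Ioi fun w (hw : 1 < w) =>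
      integral_sq_mul_gammaPDFReal_mul_gammaPDFReal ha₀ hr (by linarith : (0:ℝ) < w),
    integral_const_mul]

theorem integral_sq_integral_Ioi_gammaPDFReal (ha : 1 < a) (hr : 0 < r) :
    ∫ u in Ioi 0, (∫ t in Ioi u, gammaPDFReal a r t) ^ 2
      = a / r - Gamma (a + 1/2) / (√π * Gamma a * r) := by
  have ha₀ : 0 < a := by linarith
  have hbeta : ∫ w in Ioi 1, w ^ (a - 1) * (1 + w) ^ (-(2 * a + 1))
      = (Gamma a ^ 2 / Gamma (2 * a) - 2 ^ (1 - 2 * a) / a) / 4 := by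
    have h := integral_Ioi_one_rpow_mul_one_add_rpow a (a + 1)
    rw [add_sub_cancel_right, show a + (a + 1) = 2 * a + 1 by ring] at h
    rw [h, integral_Ioo_half_one_rpow_mul_one_sub_rpow ha.le]
  rw [integral_sq_integral_Ioi (continuous_gammaPDFReal ha) (gammaPDFReal_nonneg ha₀ hr)
      (integrable_gammaPDFReal ha₀ hr) (integrableOn_mul_gammaPDFReal ha₀ hr),
    integral_mul_gammaPDFReal_mul_integral_Ioi ha hr, hbeta, Gamma_add_one (by positivity)]
  have hdup := Gamma_mul_Gamma_add_half a
  have hΓ : Gamma a ≠ 0 := (Gamma_pos_of_pos ha₀).ne'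
  have hΓ₂ : Gamma (2 * a) ≠ 0 := (Gamma_pos_of_pos (by positivity)).ne'
  have hπ : √π ≠ 0 := (sqrt_pos.2 pi_pos).ne'
  generalize (2:ℝ) ^ (1 - 2 * a) = P at hdup ⊢
  generalize Gamma (a + 1/2) = G at hdup ⊢
  field_simp
  linear_combination 4 * hdup

theorem lintegral_ofReal_min_gammaMeasure (ha : 1 < a) (hr : 0 < r) :
    ∫⁻ p, ENNReal.ofReal (min p.1 p.2) ∂(gammaMeasure a r).prod (gammaMeasure a r)
      = ENNReal.ofReal (a / r - Gamma (a + 1/2) / (√π * Gamma a * r)) := by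
  have ha₀ : 0 < a := by linarith
  have := isProbabilityMeasure_gammaMeasure ha₀ hr
  rw [lintegral_ofReal_min_prod (gammaMeasure_Iio_zero a r) (gammaMeasure_Iio_zero a r),
    ← integral_sq_integral_Ioi_gammaPDFReal ha hr,
    ofReal_integral_eq_lintegral_ofReal (integrableOn_sq_integral_Ioi (continuous_gammaPDFReal ha)
      (gammaPDFReal_nonneg ha₀ hr) (integrable_gammaPDFReal ha₀ hr)
      (integrableOn_mul_gammaPDFReal ha₀ hr)) (.of_forall fun _ => sq_nonneg _)]
  refine setLIntegral_congr_fun measurableSet_Ioi fun t _ => ?_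
  rw [gammaMeasure_Ioi ha₀ hr, sq, ENNReal.ofReal_mul
    (setIntegral_nonneg measurableSet_Ioi fun s _ => gammaPDFReal_nonneg ha₀ hr s)]

theorem integrable_min_gammaMeasure (ha : 1 < a) (hr : 0 < r) :
    Integrable (fun p : ℝ × ℝ => min p.1 p.2) ((gammaMeasure a r).prod (gammaMeasure a r)) := by
  have := isProbabilityMeasure_gammaMeasure (by linarith : 0 < a) hr
  refine ⟨(continuous_fst.min continuous_snd).aestronglyMeasurable, ?_⟩
  rw [hasFiniteIntegral_iff_ofReal (ae_nonneg_min_prod (gammaMeasure_Iio_zero a r)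
    (gammaMeasure_Iio_zero a r)), lintegral_ofReal_min_gammaMeasure ha hr]
  exact ENNReal.ofReal_lt_top

theorem integral_min_gammaMeasure (ha : 1 < a) (hr : 0 < r) :
    ∫ p, min p.1 p.2 ∂(gammaMeasure a r).prod (gammaMeasure a r)
      = a / r - Gamma (a + 1/2) / (√π * Gamma a * r) := by
  have := isProbabilityMeasure_gammaMeasure (by linarith : 0 < a) hr
  rw [integral_eq_lintegral_of_nonneg_ae (ae_nonneg_min_prod (gammaMeasure_Iio_zero a r)
      (gammaMeasure_Iio_zero a r)) (continuous_fst.min continuous_snd).aestronglyMeasurable,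
    lintegral_ofReal_min_gammaMeasure ha hr, ENNReal.toReal_ofReal]
  rw [← integral_sq_integral_Ioi_gammaPDFReal ha hr]
  exact setIntegral_nonneg measurableSet_Ioi fun _ _ => sq_nonneg _

end GammaPDF

theorem map_prod_eq_prod_of_indepFun {Ω β γ : Type*} [MeasurableSpace Ω] [MeasurableSpace β]
    [MeasurableSpace γ] {P : Measure Ω} [IsFiniteMeasure P] {X : Ω → β} {Y : Ω → γ}
    {μ : Measure β} {ν : Measure γ} [NeZero μ] [NeZero ν] (hX : P.map X = μ) (hY : P.map Y = ν)
    (hXY : IndepFun X Y P) :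
    P.map (fun ω => (X ω, Y ω)) = μ.prod ν := by
  have hXm : AEMeasurable X P := .of_map_ne_zero (hX ▸ NeZero.ne μ)
  have hYm : AEMeasurable Y P := .of_map_ne_zero (hY ▸ NeZero.ne ν)
  rw [(indepFun_iff_map_prod_eq_prod_map_map hXm hYm).1 hXY, hX, hY]

section IidGamma

variable {Ω : Type*} [MeasurableSpace Ω] {P : Measure Ω} [IsProbabilityMeasure P] {X Y : Ω → ℝ}
  {a r : ℝ}

theorem integrable_min_of_indepFun_gammaMeasure (ha : 1 < a) (hr : 0 < r)
    (hX : P.map X = gammaMeasure a r) (hY : P.map Y = gammaMeasure a r) (hXY : IndepFun X Y P) :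
    Integrable (fun ω => min (X ω) (Y ω)) P := by
  have := isProbabilityMeasure_gammaMeasure (by linarith : 0 < a) hr
  have hpair := map_prod_eq_prod_of_indepFun hX hY hXY
  have hpm : AEMeasurable (fun ω => (X ω, Y ω)) P := .of_map_ne_zero (hpair ▸ NeZero.ne _)
  exact (integrable_map_measure (continuous_fst.min continuous_snd).aestronglyMeasurable hpm).1
    (hpair ▸ integrable_min_gammaMeasure ha hr)

theorem integral_min_of_indepFun_gammaMeasure (ha : 1 < a) (hr : 0 < r)
    (hX : P.map X = gammaMeasure a r) (hY : P.map Y = gammaMeasure a r) (hXY : IndepFun X Y P) :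
    ∫ ω, min (X ω) (Y ω) ∂P = a / r - Gamma (a + 1/2) / (√π * Gamma a * r) := by
  have := isProbabilityMeasure_gammaMeasure (by linarith : 0 < a) hr
  have hpair := map_prod_eq_prod_of_indepFun hX hY hXY
  have hpm : AEMeasurable (fun ω => (X ω, Y ω)) P := .of_map_ne_zero (hpair ▸ NeZero.ne _)
  rw [← integral_min_gammaMeasure ha hr, ← hpair,
    integral_map hpm (continuous_fst.min continuous_snd).aestronglyMeasurable]

end IidGamma

theorem sq_Gamma_midpoint_le {s t : ℝ} (hs : 0 < s) (ht : 0 < t) :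
    Gamma ((s + t) / 2) ^ 2 ≤ Gamma s * Gamma t := by
  have h := Gamma_mul_add_mul_le_rpow_Gamma_mul_rpow_Gamma hs ht (a := 1/2) (b := 1/2)
    (by norm_num) (by norm_num) (by norm_num)
  rw [show 1/2 * s + 1/2 * t = (s + t) / 2 by ring, ← sqrt_eq_rpow, ← sqrt_eq_rpow] at h
  calc Gamma ((s + t) / 2) ^ 2 ≤ (√(Gamma s) * √(Gamma t)) ^ 2 :=
        pow_le_pow_left₀ (Gamma_pos_of_pos (by linarith)).le h 2
    _ = Gamma s * Gamma t := by
        rw [mul_pow, sq_sqrt (Gamma_pos_of_pos hs).le, sq_sqrt (Gamma_pos_of_pos ht).le]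

theorem sq_Gamma_add_half_div_Gamma_le {α : ℝ} (hα : 0 < α) :
    (Gamma (α + 1/2) / Gamma α) ^ 2 ≤ α := by
  have h := sq_Gamma_midpoint_le hα (by linarith : 0 < α + 1)
  rw [show (α + (α + 1)) / 2 = α + 1/2 by ring, Gamma_add_one hα.ne'] at h
  have hΓ := Gamma_pos_of_pos hα
  rw [div_pow, div_le_iff₀ (by positivity)]
  linarith

theorem sub_half_le_sq_Gamma_add_half_div_Gamma {α : ℝ} (hα : 0 < α) :
    α - 1/2 ≤ (Gamma (α + 1/2) / Gamma α) ^ 2 := by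
  have h := sq_Gamma_midpoint_le (by linarith : 0 < α + 1/2) (by linarith : 0 < α + 3/2)
  rw [show (α + 1/2 + (α + 3/2)) / 2 = α + 1 by ring, Gamma_add_one hα.ne',
    show α + 3/2 = (α + 1/2) + 1 by ring, Gamma_add_one (by linarith)] at h
  have hΓ := Gamma_pos_of_pos hα
  rw [div_pow, le_div_iff₀ (by positivity)]
  nlinarith [sq_nonneg (Gamma α)]

theorem abs_sqrt_mul_sub_mul_Gamma_div_Gamma_le {x b : ℝ} (hx : 0 < x) (hb : 0 < b) :
    |√(b * x) - b * (Gamma (x / b + 3/2) / Gamma (x / b + 1))| ≤ b ^ ((3:ℝ)/2) / (2 * √x) := by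
  obtain ⟨s, hs, rfl⟩ : ∃ s, 0 < s ∧ s ^ 2 = b := ⟨√b, sqrt_pos.2 hb, sq_sqrt hb.le⟩
  obtain ⟨y, hy, rfl⟩ : ∃ y, 0 < y ∧ y ^ 2 = x := ⟨√x, sqrt_pos.2 hx, sq_sqrt hx.le⟩
  have hα : 0 < y ^ 2 / s ^ 2 + 1 := by positivity
  have hR_up := sq_Gamma_add_half_div_Gamma_le hα
  have hR_low := sub_half_le_sq_Gamma_add_half_div_Gamma hα
  rw [show y ^ 2 / s ^ 2 + 1 + 1/2 = y ^ 2 / s ^ 2 + 3/2 by ring] at hR_up hR_low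
  set R := Gamma (y ^ 2 / s ^ 2 + 3/2) / Gamma (y ^ 2 / s ^ 2 + 1)
  have hR₀ : 0 ≤ R := div_nonneg (Gamma_pos_of_pos (by positivity)).le (Gamma_pos_of_pos hα).le
  have hs4 : s ^ 4 * (y ^ 2 / s ^ 2) = s ^ 2 * y ^ 2 := by field_simp
  have hlow : s * y ≤ s ^ 2 * R := by
    rw [← pow_le_pow_iff_left₀ (by positivity) (by positivity) two_ne_zero]
    nlinarith [mul_le_mul_of_nonneg_left hR_low (by positivity : (0:ℝ) ≤ s ^ 4)]
  have hup : s ^ 2 * R ≤ s * y + s ^ 3 / (2 * y) := by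
    have hsq : (s * y + s ^ 3 / (2 * y)) ^ 2 = s ^ 2 * y ^ 2 + s ^ 4 + s ^ 6 / (4 * y ^ 2) := by
      field_simp; ring
    rw [← pow_le_pow_iff_left₀ (by positivity) (by positivity) two_ne_zero, hsq]
    nlinarith [mul_le_mul_of_nonneg_left hR_up (by positivity : (0:ℝ) ≤ s ^ 4),
      (by positivity : (0:ℝ) ≤ s ^ 6 / (4 * y ^ 2))]
  have h32 : (s ^ 2) ^ ((3:ℝ)/2) = s ^ 3 := by
    rw [← rpow_natCast, ← rpow_mul hs.le]; norm_num
  rw [sqrt_mul' _ (sq_nonneg y), sqrt_sq hs.le, sqrt_sq hy.le, h32, abs_sub_comm,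
    abs_of_nonneg (by linarith)]
  linarith

/-- If, for each `b > 0`, `X b` and `Y b` are i.i.d. Gamma(shape `x/b + 1`, scale `b`)
random variables, then `E[min{X,Y} − x] = b(x/b+1) − (b/√π) Γ(x/b+3/2)/Γ(x/b+1) − x`, and as
`b → 0⁺` this equals `−√(bx/π) + b + O_x(b^(3/2))`. -/
theorem min_gamma_kernel_first_moment_asymp {Ω : Type*} [MeasureSpace Ω]
    [IsProbabilityMeasure (ℙ : Measure Ω)]
    (x : ℝ) (hx : 0 < x) (X Y : ℝ → Ω → ℝ)
    (hX : ∀ b, 0 < b → Measure.map (X b) ℙ = gammaMeasure (b⁻¹ * x + 1) b⁻¹)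
    (hY : ∀ b, 0 < b → Measure.map (Y b) ℙ = gammaMeasure (b⁻¹ * x + 1) b⁻¹)
    (hindep : ∀ b, 0 < b → IndepFun (X b) (Y b) ℙ) :
    (∀ b, 0 < b →
      ∫ ω, (min (X b ω) (Y b ω) - x) ∂ℙ =
        b * (x / b + 1) - (b / Real.sqrt π) * (Real.Gamma (x / b + 3/2) / Real.Gamma (x / b + 1))
          - x) ∧
    ∃ C b₀ : ℝ, 0 < C ∧ 0 < b₀ ∧ ∀ b, 0 < b → b < b₀ →
      |(∫ ω, (min (X b ω) (Y b ω) - x) ∂ℙ) - (-Real.sqrt (b * x / π) + b)|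
        ≤ C * b ^ ((3 : ℝ) / 2) := by
  have hexact : ∀ b, 0 < b → ∫ ω, (min (X b ω) (Y b ω) - x) ∂ℙ =
      b * (x / b + 1) - (b / √π) * (Gamma (x / b + 3/2) / Gamma (x / b + 1)) - x := by
    intro b hb
    have ha : 1 < b⁻¹ * x + 1 := by have := mul_pos (inv_pos.2 hb) hx; linarith
    rw [integral_sub (integrable_min_of_indepFun_gammaMeasure ha (inv_pos.2 hb) (hX b hb)
        (hY b hb) (hindep b hb)) (integrable_const x),
      integral_min_of_indepFun_gammaMeasure ha (inv_pos.2 hb) (hX b hb) (hY b hb) (hindep b hb),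
      integral_const, probReal_univ, one_smul, inv_mul_eq_div,
      show x / b + 1 + 1/2 = x / b + 3/2 by ring]
    field_simp
  refine ⟨hexact, 1 / (2 * √π * √x), 1, by positivity, one_pos, fun b hb _ => ?_⟩
  have hπ : 0 < √π := sqrt_pos.2 pi_pos
  calc |(∫ ω, (min (X b ω) (Y b ω) - x) ∂ℙ) - (-√(b * x / π) + b)|
      = |√(b * x) - b * (Gamma (x / b + 3/2) / Gamma (x / b + 1))| / √π := by
        rw [hexact b hb, sqrt_div' _ pi_pos.le, ← abs_of_pos hπ, ← abs_div, abs_of_pos hπ]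
        congr 1
        field_simp
        ring
    _ ≤ b ^ ((3:ℝ)/2) / (2 * √x) / √π := by
        gcongr
        exact abs_sqrt_mul_sub_mul_Gamma_div_Gamma_le hx hb
    _ = 1 / (2 * √π * √x) * b ^ ((3:ℝ)/2) := by ring
end
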